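/- arXiv:math/0101200 — 9 statements merged into one kernel-verified Lean document; each statement's English description precedes it below -/
import Mathlib

section
/- For complex numbers c and d, there exist complex numbers v and w such that c = v·cos w and d = v·sin w if and only if c² + d² ≠ 0 or (c,d) = (0,0). (Equivalently: a bicomplex number q = (c,d) can be written in the polar form q = (v,0) ⊙ (cos w, sin w) exactly when q is nonsingular or q = 0.) -/
theorem bicomplex_polar_form_iff (c d : ℂ) :
    (∃ v w : ℂ, c = v * Complex.cos w ∧ d = v * Complex.sin w) ↔
      (c ^ 2 + d ^ 2 ≠ 0 ∨ (c = 0 ∧ d = 0)) := by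
  constructor
  · rintro ⟨v, w, rfl, rfl⟩
    rcases eq_or_ne v 0 with hv | hv
    · right; simp [hv]
    · left
      have : (v * Complex.cos w) ^ 2 + (v * Complex.sin w) ^ 2 = v ^ 2 := by
        linear_combination v ^ 2 * Complex.sin_sq_add_cos_sq w
      rw [this]
      exact pow_ne_zero 2 hv
  · rintro (h | ⟨rfl, rfl⟩)
    · obtain ⟨v, hv⟩ := Complex.isAlgClosed.exists_pow_nat_eq (c ^ 2 + d ^ 2) two_pos
      have hv0 : v ≠ 0 := by rintro rfl; simp at hv; exact h hv.symm
      obtain ⟨w, hw⟩ := Complex.cos_surjective (c / v)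
      have hsin : Complex.sin w ^ 2 = (d / v) ^ 2 := by
        have h1 : Complex.sin w ^ 2 = 1 - Complex.cos w ^ 2 := by
          have := Complex.sin_sq_add_cos_sq w; linear_combination this
        rw [h1, hw]
        field_simp
        linear_combination hv
      have : Complex.sin w = d / v ∨ Complex.sin w = -(d / v) := by
        rcases sq_eq_sq_iff_eq_or_eq_neg.mp hsin with h' | h'
        · left; exact h'
        · right; rw [h']
      rcases this with h' | h'
      · exact ⟨v, w, by rw [hw]; field_simp, by rw [h']; field_simp⟩
      · refine ⟨v, -w, ?_, ?_⟩
        · rw [Complex.cos_neg, hw]; field_simp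
        · rw [Complex.sin_neg, h']; field_simp
    · exact ⟨0, 0, by simp, by simp⟩
end

section
/- The range of the bicomplex exponential equals the set of nonsingular bicomplex numbers: {(e^a·cos b, e^a·sin b) : a, b ∈ ℂ} = {(c,d) ∈ ℂ×ℂ : c² + d² ≠ 0}. In particular the bicomplex exponential never takes a singular value, and it attains every nonsingular value. -/
open Complex

theorem bicomplex_exp_range :
    {p : ℂ × ℂ | ∃ a b : ℂ,
        p = (Complex.exp a * Complex.cos b, Complex.exp a * Complex.sin b)} =
      {p : ℂ × ℂ | p.1 ^ 2 + p.2 ^ 2 ≠ 0} := by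
  ext ⟨c, d⟩
  simp only [Set.mem_setOf_eq, Prod.mk.injEq, Prod.ext_iff]
  constructor
  · rintro ⟨a, b, hc, hd⟩
    subst hc; subst hd
    have key : (exp a * cos b) ^ 2 + (exp a * sin b) ^ 2 = exp a ^ 2 := by
      linear_combination exp a ^ 2 * Complex.sin_sq_add_cos_sq b
    rw [key]
    exact pow_ne_zero _ (Complex.exp_ne_zero a)
  · intro h
    have hfac : c ^ 2 + d ^ 2 = (c + I * d) * (c - I * d) := by
      linear_combination d ^ 2 * Complex.I_sq
    rw [hfac] at h
    have h1 : c + I * d ≠ 0 := fun hz => h (by rw [hz, zero_mul])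
    have h2 : c - I * d ≠ 0 := fun hz => h (by rw [hz, mul_zero])
    have hu : (c + I * d) ∈ Set.range exp := by rw [Complex.range_exp]; exact h1
    have hv : (c - I * d) ∈ Set.range exp := by rw [Complex.range_exp]; exact h2
    obtain ⟨u, hu⟩ := hu
    obtain ⟨v, hv⟩ := hv
    refine ⟨(u + v) / 2, (u - v) / (2 * I), ?_, ?_⟩
    · have hbI : (u - v) / (2 * I) * I = (u - v) / 2 := by
        field_simp
      have hbI' : -((u - v) / (2 * I)) * I = -((u - v) / 2) := by
        rw [neg_mul, hbI]
      have := Complex.two_cos ((u - v) / (2 * I))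
      rw [hbI, hbI'] at this
      have hcos : cos ((u - v) / (2 * I)) = (exp ((u - v) / 2) + exp (-((u - v) / 2))) / 2 := by
        linear_combination this / 2
      have eu : exp ((u + v) / 2) * exp ((u - v) / 2) = c + I * d := by
        rw [← Complex.exp_add, show (u + v) / 2 + (u - v) / 2 = u from by ring, hu]
      have ev : exp ((u + v) / 2) * exp (-((u - v) / 2)) = c - I * d := by
        rw [← Complex.exp_add, show (u + v) / 2 + -((u - v) / 2) = v from by ring, hv]
      rw [hcos]
      linear_combination (-eu - ev) / 2
    · have hbI : (u - v) / (2 * I) * I = (u - v) / 2 := by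
        field_simp
      have hbI' : -((u - v) / (2 * I)) * I = -((u - v) / 2) := by
        rw [neg_mul, hbI]
      have := Complex.two_sin ((u - v) / (2 * I))
      rw [hbI, hbI'] at this
      have hsin : sin ((u - v) / (2 * I)) =
          (exp (-((u - v) / 2)) - exp ((u - v) / 2)) * I / 2 := by
        linear_combination this / 2
      have eu : exp ((u + v) / 2) * exp ((u - v) / 2) = c + I * d := by
        rw [← Complex.exp_add, show (u + v) / 2 + (u - v) / 2 = u from by ring, hu]
      have ev : exp ((u + v) / 2) * exp (-((u - v) / 2)) = c - I * d := by
        rw [← Complex.exp_add, show (u + v) / 2 + -((u - v) / 2) = v from by ring, hv]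
      rw [hsin]
      linear_combination (eu - ev) * I / 2 + d * Complex.I_sq
end

section
/- Let G ⊆ ℂ×ℂ be open, let φ₁, φ₂ : ℂ×ℂ → ℂ, set ψ = (φ₁,φ₂), and suppose that at a point p = (a,b) ∈ G there is L = (L₁,L₂) ∈ ℂ×ℂ such that the bicomplex difference quotient (ψ(p+Δp) − ψ(p)) ⊙ (Δp)⁻¹ tends to L as Δp → 0 restricted to nonsingular increments Δp. Then the functions z ↦ φ₁(z,b) and z ↦ φ₂(z,b) are complex differentiable at a with derivatives L₁ and L₂ respectively, and the functions z ↦ φ₁(a,z) and z ↦ φ₂(a,z) are complex differentiable at b with derivatives −L₂ and L₁ respectively; in particular the bicomplex Cauchy–Riemann equations ∂φ₁/∂a = ∂φ₂/∂b and ∂φ₂/∂a = −∂φ₁/∂b hold at p. -/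
/-- Bicomplex multiplication on ℂ × ℂ. -/
def bmul (p q : ℂ × ℂ) : ℂ × ℂ := (p.1 * q.1 - p.2 * q.2, p.2 * q.1 + p.1 * q.2)

/-- Bicomplex inverse (defined for nonsingular numbers). -/
noncomputable def binv (p : ℂ × ℂ) : ℂ × ℂ :=
  (p.1 / (p.1 ^ 2 + p.2 ^ 2), -p.2 / (p.1 ^ 2 + p.2 ^ 2))

/-- The set of nonsingular bicomplex numbers. -/
def nonsingularSet : Set (ℂ × ℂ) := {q | q.1 ^ 2 + q.2 ^ 2 ≠ 0}

/-!
Along a complex line `Δp = t • u` through a nonsingular direction `u`, the bicomplex inverse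
scales as `(t • u)⁻¹ = t⁻¹ • u⁻¹`, so the bicomplex difference quotient multiplied by `u` is the
ordinary slope of `t ↦ ψ (p + t • u)`. The directions `u = (1, 0)` and `u = (0, 1)` give the two
partial derivatives `L` and `L ⊙ (0, 1) = (-L₂, L₁)`.
-/

open Filter Topology

section

variable {𝕜 E F : Type*} [NontriviallyNormedField 𝕜] [NormedAddCommGroup E] [NormedSpace 𝕜 E]
  [NormedAddCommGroup F] [NormedSpace 𝕜 F] {f : 𝕜 → E × F} {f' : E × F} {x : 𝕜}

theorem HasDerivAt.fst (h : HasDerivAt f f' x) : HasDerivAt (fun x => (f x).1) f'.1 x :=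
  (hasFDerivAt_fst (p := f x)).comp_hasDerivAt x h

theorem HasDerivAt.snd (h : HasDerivAt f f' x) : HasDerivAt (fun x => (f x).2) f'.2 x :=
  (hasFDerivAt_snd (p := f x)).comp_hasDerivAt x h

end

lemma bmul_smul_left (c : ℂ) (p q : ℂ × ℂ) : bmul (c • p) q = c • bmul p q := by
  ext <;> simp only [bmul, Prod.smul_fst, Prod.smul_snd, smul_eq_mul] <;> ring

lemma bmul_smul_right (c : ℂ) (p q : ℂ × ℂ) : bmul p (c • q) = c • bmul p q := by
  ext <;> simp only [bmul, Prod.smul_fst, Prod.smul_snd, smul_eq_mul] <;> ring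

lemma binv_smul (c : ℂ) (p : ℂ × ℂ) : binv (c • p) = c⁻¹ • binv p := by
  rcases eq_or_ne c 0 with rfl | hc
  · simp [binv]
  · ext <;> simp only [binv, Prod.smul_fst, Prod.smul_snd, smul_eq_mul] <;> field_simp

lemma bmul_bmul_binv_cancel (p : ℂ × ℂ) {q : ℂ × ℂ} (hq : q ∈ nonsingularSet) :
    bmul (bmul p (binv q)) q = p := by
  have hq : q.1 ^ 2 + q.2 ^ 2 ≠ 0 := hq
  ext <;> simp only [bmul, binv] <;> field_simp <;> ring

lemma continuous_bmul_const (q : ℂ × ℂ) : Continuous (fun p => bmul p q) := by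
  unfold bmul; fun_prop

lemma smul_mem_nonsingularSet {c : ℂ} {q : ℂ × ℂ} (hc : c ≠ 0) (hq : q ∈ nonsingularSet) :
    c • q ∈ nonsingularSet := by
  have hq : q.1 ^ 2 + q.2 ^ 2 ≠ 0 := hq
  show (c * q.1) ^ 2 + (c * q.2) ^ 2 ≠ 0
  rw [mul_pow, mul_pow, ← mul_add]
  exact mul_ne_zero (pow_ne_zero 2 hc) hq

lemma tendsto_smul_nhdsNE_nonsingularSet {q : ℂ × ℂ} (hq : q ∈ nonsingularSet) :
    Tendsto (fun c : ℂ => c • q) (𝓝[≠] 0) (𝓝[nonsingularSet] 0) := by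
  refine tendsto_nhdsWithin_of_tendsto_nhds_of_eventually_within _ ?_ ?_
  · exact ((continuous_id.smul continuous_const).tendsto' 0 0 (zero_smul ℂ q)).mono_left
      nhdsWithin_le_nhds
  · filter_upwards [self_mem_nhdsWithin] with c hc using smul_mem_nonsingularSet hc hq

noncomputable def bicomplexDiffQuot (ψ : ℂ × ℂ → ℂ × ℂ) (p Δp : ℂ × ℂ) : ℂ × ℂ :=
  bmul (ψ (p + Δp) - ψ p) (binv Δp)

def HasBicomplexDerivAt (ψ : ℂ × ℂ → ℂ × ℂ) (L p : ℂ × ℂ) : Prop :=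
  Tendsto (bicomplexDiffQuot ψ p) (𝓝[nonsingularSet] 0) (𝓝 L)

lemma bmul_bicomplexDiffQuot_smul (ψ : ℂ × ℂ → ℂ × ℂ) (p : ℂ × ℂ) (t : ℂ) {u : ℂ × ℂ}
    (hu : u ∈ nonsingularSet) :
    bmul (bicomplexDiffQuot ψ p (t • u)) u = t⁻¹ • (ψ (p + t • u) - ψ p) := by
  rw [bicomplexDiffQuot, binv_smul, bmul_smul_right, bmul_smul_left, bmul_bmul_binv_cancel _ hu]

namespace HasBicomplexDerivAt

variable {ψ : ℂ × ℂ → ℂ × ℂ} {L : ℂ × ℂ}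

lemma tendsto_slope_smul {p u : ℂ × ℂ} (h : HasBicomplexDerivAt ψ L p)
    (hu : u ∈ nonsingularSet) :
    Tendsto (fun t : ℂ => t⁻¹ • (ψ (p + t • u) - ψ p)) (𝓝[≠] 0) (𝓝 (bmul L u)) := by
  have hline := ((continuous_bmul_const u).tendsto L).comp
    (h.comp (tendsto_smul_nhdsNE_nonsingularSet hu))
  exact hline.congr fun t => bmul_bicomplexDiffQuot_smul ψ p t hu

lemma hasDerivAt_partial_fst {a b : ℂ} (h : HasBicomplexDerivAt ψ L (a, b)) :
    HasDerivAt (fun z => ψ (z, b)) L a := by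
  rw [hasDerivAt_iff_tendsto_slope_zero]
  simpa [bmul] using h.tendsto_slope_smul (u := (1, 0)) (by simp [nonsingularSet])

lemma hasDerivAt_partial_snd {a b : ℂ} (h : HasBicomplexDerivAt ψ L (a, b)) :
    HasDerivAt (fun z => ψ (a, z)) (-L.2, L.1) b := by
  rw [hasDerivAt_iff_tendsto_slope_zero]
  simpa [bmul] using h.tendsto_slope_smul (u := (0, 1)) (by simp [nonsingularSet])

end HasBicomplexDerivAt

theorem bicomplex_deriv_implies_CR_general
    (φ₁ φ₂ : ℂ × ℂ → ℂ) (a b : ℂ) (L : ℂ × ℂ)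
    (hlim : Filter.Tendsto
      (fun Δp : ℂ × ℂ =>
        bmul ((φ₁ ((a, b) + Δp), φ₂ ((a, b) + Δp)) - (φ₁ (a, b), φ₂ (a, b))) (binv Δp))
      (nhdsWithin 0 nonsingularSet) (nhds L)) :
    HasDerivAt (fun z => φ₁ (z, b)) L.1 a ∧
    HasDerivAt (fun z => φ₂ (z, b)) L.2 a ∧
    HasDerivAt (fun z => φ₁ (a, z)) (-L.2) b ∧
    HasDerivAt (fun z => φ₂ (a, z)) L.1 b := by
  have h : HasBicomplexDerivAt (fun q => (φ₁ q, φ₂ q)) L (a, b) := hlim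
  have hfst := h.hasDerivAt_partial_fst
  have hsnd := h.hasDerivAt_partial_snd
  exact ⟨hfst.fst, hfst.snd, hsnd.fst, hsnd.snd⟩

theorem bicomplex_deriv_implies_CR (G : Set (ℂ × ℂ)) (hG : IsOpen G)
    (φ₁ φ₂ : ℂ × ℂ → ℂ) (a b : ℂ) (hp : (a, b) ∈ G) (L : ℂ × ℂ)
    (hlim : Filter.Tendsto
      (fun Δp : ℂ × ℂ =>
        bmul ((φ₁ ((a, b) + Δp), φ₂ ((a, b) + Δp)) - (φ₁ (a, b), φ₂ (a, b))) (binv Δp))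
      (nhdsWithin 0 nonsingularSet) (nhds L)) :
    HasDerivAt (fun z => φ₁ (z, b)) L.1 a ∧
    HasDerivAt (fun z => φ₂ (z, b)) L.2 a ∧
    HasDerivAt (fun z => φ₁ (a, z)) (-L.2) b ∧
    HasDerivAt (fun z => φ₂ (a, z)) L.1 b :=
  bicomplex_deriv_implies_CR_general φ₁ φ₂ a b L hlim
end

section
/- Let G ⊆ ℂ×ℂ be open and let φ₁, φ₂ : ℂ×ℂ → ℂ be ℂ-differentiable on G and satisfy the bicomplex Cauchy–Riemann equations ∂φ₁/∂a = ∂φ₂/∂b and ∂φ₂/∂a = −∂φ₁/∂b throughout G. Then ψ = (φ₁,φ₂) is bicomplex-differentiable at every p ∈ G: the bicomplex difference quotient (ψ(p+Δp) − ψ(p)) ⊙ (Δp)⁻¹ tends to (∂φ₁/∂a (p), ∂φ₂/∂a (p)) as Δp → 0 restricted to nonsingular increments Δp. -/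
/-!
In the idempotent coordinates `(a, b) ↦ (a + i b, a - i b)` bicomplex multiplication becomes
componentwise multiplication on `ℂ × ℂ`, a number is nonsingular iff both of its coordinates are
nonzero, and its bicomplex inverse is the componentwise inverse. The Cauchy–Riemann equations say
that the derivative of `ψ = (φ₁, φ₂)` is bicomplex multiplication by `(∂φ₁/∂a, ∂φ₂/∂a)`, which is
diagonal in these coordinates. Since this holds throughout the open set `G`, near `p` the first
idempotent coordinate of `ψ` depends only on the first coordinate of the point, and likewise for the
second; so the bicomplex difference quotient splits into two one-variable difference quotients.
Differentiability at `p` alone would not do: `(Δp)⁻¹` is unbounded relative to `‖Δp‖⁻¹` near the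
null cone `a² + b² = 0`.
-/

open Complex Filter Topology Metric

section PartialDerivatives

variable {𝕜 E F H : Type*} [RCLike 𝕜] [NormedAddCommGroup E] [NormedSpace 𝕜 E]
  [NormedAddCommGroup F] [NormedSpace 𝕜 F] [NormedAddCommGroup H] [NormedSpace 𝕜 H]

theorem eventually_eq_apply_mk_of_fderiv_inr_eq_zero {f : E × F → H} {f' : E × F → E × F →L[𝕜] H}
    {U : Set (E × F)} {p : E × F} (hU : IsOpen U) (hp : p ∈ U)
    (hf : ∀ q ∈ U, HasFDerivAt f (f' q) q) (hf' : ∀ q ∈ U, ∀ y, f' q (0, y) = 0) :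
    ∀ᶠ w in 𝓝 p, f w = f (w.1, p.2) := by
  let : NormedSpace ℝ F := .restrictScalars ℝ 𝕜 F
  obtain ⟨r, hr, hball⟩ := Metric.isOpen_iff.mp hU p hp
  filter_upwards [ball_mem_nhds p hr] with w hw
  rw [mem_ball, Prod.dist_eq, max_lt_iff] at hw
  have hslice : ∀ y ∈ ball p.2 r, (w.1, y) ∈ U := fun y hy =>
    hball (by rw [mem_ball, Prod.dist_eq, max_lt_iff]; exact ⟨hw.1, hy⟩)
  have hderiv : ∀ y ∈ ball p.2 r, HasFDerivAt (fun y => f (w.1, y)) 0 y := fun y hy =>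
    ((hf _ (hslice y hy)).comp y (hasFDerivAt_prodMk_right (𝕜 := 𝕜) w.1 y)).congr_fderiv
      (ContinuousLinearMap.ext (hf' _ (hslice y hy)))
  exact isOpen_ball.is_const_of_fderiv_eq_zero (convex_ball _ _).isPreconnected
    (fun y hy => (hderiv y hy).differentiableAt.differentiableWithinAt)
    (fun y hy => (hderiv y hy).fderiv) hw.2 (mem_ball_self hr)

theorem tendsto_inv_fst_smul_sub_of_fderiv_inr_eq_zero {f : 𝕜 × F → H}
    {f' : 𝕜 × F → 𝕜 × F →L[𝕜] H} {U : Set (𝕜 × F)} {p : 𝕜 × F} (hU : IsOpen U) (hp : p ∈ U)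
    (hf : ∀ q ∈ U, HasFDerivAt f (f' q) q) (hf' : ∀ q ∈ U, ∀ y, f' q (0, y) = 0) :
    Tendsto (fun w : 𝕜 × F => (w.1)⁻¹ • (f (p + w) - f p)) (𝓝[{w | w.1 ≠ 0}] 0)
      (𝓝 (f' p (1, 0))) := by
  set h : 𝕜 → H := fun t => f (p + t • (1, 0))
  have hline : HasDerivAt h (f' p (1, 0)) 0 := by
    have hl : HasDerivAt (fun t : 𝕜 => p + t • ((1 : 𝕜), (0 : F))) (1, 0) 0 := by
      simpa using ((hasDerivAt_id (0 : 𝕜)).smul_const ((1 : 𝕜), (0 : F))).const_add p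
    exact (by simpa using hf p hp : HasFDerivAt f (f' p) (p + (0 : 𝕜) • (1, 0))).comp_hasDerivAt 0 hl
  have hfst : Tendsto Prod.fst (𝓝[{w | w.1 ≠ 0}] (0 : 𝕜 × F)) (𝓝[≠] 0) :=
    continuous_fst.continuousWithinAt.tendsto_nhdsWithin fun w hw => hw
  refine ((hasDerivAt_iff_tendsto_slope.mp hline).comp hfst).congr' ?_
  have hconst := (continuous_const_add p).tendsto' 0 p (add_zero p) |>.eventually
    (eventually_eq_apply_mk_of_fderiv_inr_eq_zero hU hp hf hf')
  filter_upwards [nhdsWithin_le_nhds hconst] with w hw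
  have hshift : p + w.1 • ((1 : 𝕜), (0 : F)) = ((p + w).1, p.2) := Prod.ext (by simp) (by simp)
  rw [Function.comp_apply, slope_def_module, sub_zero, hw]
  simp only [h, hshift, zero_smul, add_zero]

theorem tendsto_inv_snd_smul_sub_of_fderiv_inl_eq_zero {f : E × 𝕜 → H}
    {f' : E × 𝕜 → E × 𝕜 →L[𝕜] H} {U : Set (E × 𝕜)} {p : E × 𝕜} (hU : IsOpen U) (hp : p ∈ U)
    (hf : ∀ q ∈ U, HasFDerivAt f (f' q) q) (hf' : ∀ q ∈ U, ∀ x, f' q (x, 0) = 0) :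
    Tendsto (fun w : E × 𝕜 => (w.2)⁻¹ • (f (p + w) - f p)) (𝓝[{w | w.2 ≠ 0}] 0)
      (𝓝 (f' p (0, 1))) := by
  let σ : (𝕜 × E) ≃L[𝕜] E × 𝕜 := ContinuousLinearEquiv.prodComm 𝕜 𝕜 E
  have hswap := tendsto_inv_fst_smul_sub_of_fderiv_inr_eq_zero (f := f ∘ σ)
    (f' := fun q => (f' (σ q)).comp (σ : 𝕜 × E →L[𝕜] E × 𝕜)) (U := σ ⁻¹' U) (p := σ.symm p)
    (hU.preimage σ.continuous) (by simpa using hp)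
    (fun q hq => (hf (σ q) hq).comp q σ.hasFDerivAt) (fun q hq x => hf' (σ q) hq x)
  have hσ : Tendsto σ.symm (𝓝[{w | w.2 ≠ 0}] 0) (𝓝[{w | w.1 ≠ 0}] 0) := by
    simpa using σ.symm.continuous.continuousWithinAt.tendsto_nhdsWithin
      (s := {w : E × 𝕜 | w.2 ≠ 0}) (x := 0) fun w hw => hw
  simpa [σ, Function.comp_def] using hswap.comp hσ

theorem tendsto_sub_mul_inv_of_hasFDerivAt_mul {F κ : 𝕜 × 𝕜 → 𝕜 × 𝕜} {U : Set (𝕜 × 𝕜)}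
    {p : 𝕜 × 𝕜} (hU : IsOpen U) (hp : p ∈ U)
    (hF : ∀ q ∈ U, HasFDerivAt F (ContinuousLinearMap.mul 𝕜 (𝕜 × 𝕜) (κ q)) q) :
    Tendsto (fun w => (F (p + w) - F p) * w⁻¹) (𝓝[{w | w.1 ≠ 0 ∧ w.2 ≠ 0}] 0) (𝓝 (κ p)) := by
  have h₁ := tendsto_inv_fst_smul_sub_of_fderiv_inr_eq_zero hU hp (fun q hq => (hF q hq).fst)
    (fun q _ y => by simp)
  have h₂ := tendsto_inv_snd_smul_sub_of_fderiv_inl_eq_zero hU hp (fun q hq => (hF q hq).snd)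
    (fun q _ x => by simp)
  have hT₁ : 𝓝[{w | w.1 ≠ 0 ∧ w.2 ≠ 0}] (0 : 𝕜 × 𝕜) ≤ 𝓝[{w | w.1 ≠ 0}] 0 :=
    nhdsWithin_mono 0 fun _ => And.left
  have hT₂ : 𝓝[{w | w.1 ≠ 0 ∧ w.2 ≠ 0}] (0 : 𝕜 × 𝕜) ≤ 𝓝[{w | w.2 ≠ 0}] 0 :=
    nhdsWithin_mono 0 fun _ => And.right
  convert (h₁.mono_left hT₁).prodMk_nhds (h₂.mono_left hT₂) using 2 <;> ext <;> simp [mul_comm]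

end PartialDerivatives

noncomputable def idempotentCoord : (ℂ × ℂ) ≃L[ℂ] ℂ × ℂ :=
  LinearEquiv.toContinuousLinearEquiv
    { toFun := fun p => (p.1 + I * p.2, p.1 - I * p.2)
      invFun := fun z => ((z.1 + z.2) / 2, (z.1 - z.2) / (2 * I))
      map_add' := fun p q => by ext <;> simp <;> ring
      map_smul' := fun c p => by ext <;> simp <;> ring
      left_inv := fun p => by ext <;> field_simp <;> ring
      right_inv := fun z => by ext <;> field_simp <;> ring }

theorem idempotentCoord_apply (p : ℂ × ℂ) : idempotentCoord p = (p.1 + I * p.2, p.1 - I * p.2) :=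
  rfl

theorem sq_add_sq_eq_idempotentCoord_mul (p : ℂ × ℂ) :
    p.1 ^ 2 + p.2 ^ 2 = (idempotentCoord p).1 * (idempotentCoord p).2 := by
  rw [idempotentCoord_apply]; linear_combination p.2 ^ 2 * I_sq

theorem idempotentCoord_bmul (p q : ℂ × ℂ) :
    idempotentCoord (bmul p q) = idempotentCoord p * idempotentCoord q := by
  simp only [idempotentCoord_apply, bmul, Prod.ext_iff, Prod.fst_mul, Prod.snd_mul]
  constructor <;> linear_combination (-p.2 * q.2) * I_sq

theorem mem_nonsingularSet_iff {p : ℂ × ℂ} :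
    p ∈ nonsingularSet ↔ (idempotentCoord p).1 ≠ 0 ∧ (idempotentCoord p).2 ≠ 0 := by
  rw [nonsingularSet, Set.mem_ofPred_eq, sq_add_sq_eq_idempotentCoord_mul, mul_ne_zero_iff]

theorem idempotentCoord_binv {p : ℂ × ℂ} (hp : p ∈ nonsingularSet) :
    idempotentCoord (binv p) = (idempotentCoord p)⁻¹ := by
  obtain ⟨h₁, h₂⟩ := mem_nonsingularSet_iff.mp hp
  have hS := sq_add_sq_eq_idempotentCoord_mul p
  simp only [idempotentCoord_apply] at h₁ h₂ hS ⊢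
  simp only [binv, hS, Prod.ext_iff, Prod.fst_inv, Prod.snd_inv]
  constructor <;> field_simp <;> ring

theorem prod_apply_eq_bmul_of_cauchyRiemann (L₁ L₂ : ℂ × ℂ →L[ℂ] ℂ)
    (h₁ : L₁ (1, 0) = L₂ (0, 1)) (h₂ : L₂ (1, 0) = -L₁ (0, 1)) (w : ℂ × ℂ) :
    L₁.prod L₂ w = bmul (L₁ (1, 0), L₂ (1, 0)) w := by
  have hw : w = w.1 • ((1 : ℂ), (0 : ℂ)) + w.2 • ((0 : ℂ), (1 : ℂ)) := by ext <;> simp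
  rw [hw]
  simp only [ContinuousLinearMap.prod_apply, map_add, map_smul, bmul, h₁, h₂]
  ext <;> simp <;> ring

theorem hasFDerivAt_idempotentCoord_conj {ψ : ℂ × ℂ → ℂ × ℂ} {L : ℂ × ℂ →L[ℂ] ℂ × ℂ}
    {κ w : ℂ × ℂ} (hψ : HasFDerivAt ψ L (idempotentCoord.symm w)) (hL : ∀ v, L v = bmul κ v) :
    HasFDerivAt (idempotentCoord ∘ ψ ∘ idempotentCoord.symm)
      (ContinuousLinearMap.mul ℂ (ℂ × ℂ) (idempotentCoord κ)) w := by
  refine (idempotentCoord.hasFDerivAt.comp w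
    (hψ.comp w idempotentCoord.symm.hasFDerivAt)).congr_fderiv (ContinuousLinearMap.ext fun v => ?_)
  simp [hL, idempotentCoord_bmul]

theorem CR_implies_bicomplex_differentiable (G : Set (ℂ × ℂ)) (hG : IsOpen G)
    (φ₁ φ₂ : ℂ × ℂ → ℂ)
    (hd₁ : ∀ p ∈ G, DifferentiableAt ℂ φ₁ p)
    (hd₂ : ∀ p ∈ G, DifferentiableAt ℂ φ₂ p)
    (hcr₁ : ∀ p ∈ G, fderiv ℂ φ₁ p (1, 0) = fderiv ℂ φ₂ p (0, 1))
    (hcr₂ : ∀ p ∈ G, fderiv ℂ φ₂ p (1, 0) = -fderiv ℂ φ₁ p (0, 1)) :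
    ∀ p ∈ G, Filter.Tendsto
      (fun Δp : ℂ × ℂ =>
        bmul ((φ₁ (p + Δp), φ₂ (p + Δp)) - (φ₁ p, φ₂ p)) (binv Δp))
      (nhdsWithin 0 nonsingularSet)
      (nhds (fderiv ℂ φ₁ p (1, 0), fderiv ℂ φ₂ p (1, 0))) := by
  intro p hp
  let κ : ℂ × ℂ → ℂ × ℂ := fun q => (fderiv ℂ φ₁ q (1, 0), fderiv ℂ φ₂ q (1, 0))
  have hconj : ∀ w ∈ idempotentCoord.symm ⁻¹' G,
      HasFDerivAt (idempotentCoord ∘ (fun q => (φ₁ q, φ₂ q)) ∘ idempotentCoord.symm)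
        (ContinuousLinearMap.mul ℂ _ (idempotentCoord (κ (idempotentCoord.symm w)))) w :=
    fun w hw => hasFDerivAt_idempotentCoord_conj
      ((hd₁ _ hw).hasFDerivAt.prodMk (hd₂ _ hw).hasFDerivAt)
      (prod_apply_eq_bmul_of_cauchyRiemann _ _ (hcr₁ _ hw) (hcr₂ _ hw))
  have hlim := tendsto_sub_mul_inv_of_hasFDerivAt_mul
    (hG.preimage idempotentCoord.symm.continuous) (p := idempotentCoord p) (by simpa using hp) hconj
  have hcoord : Tendsto idempotentCoord (𝓝[nonsingularSet] 0) (𝓝[{w | w.1 ≠ 0 ∧ w.2 ≠ 0}] 0) := by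
    simpa using idempotentCoord.continuous.continuousWithinAt.tendsto_nhdsWithin
      (x := 0) (t := {w : ℂ × ℂ | w.1 ≠ 0 ∧ w.2 ≠ 0}) fun Δ hΔ => mem_nonsingularSet_iff.mp hΔ
  have hquot := (idempotentCoord.symm.continuous.tendsto _).comp (hlim.comp hcoord)
  simp only [ContinuousLinearEquiv.symm_apply_apply] at hquot
  refine hquot.congr' ?_
  filter_upwards [self_mem_nhdsWithin] with Δ hΔ
  apply idempotentCoord.injective
  simp only [Function.comp_apply, ContinuousLinearEquiv.apply_symm_apply,
    ContinuousLinearEquiv.symm_apply_apply, idempotentCoord_bmul, idempotentCoord_binv hΔ, map_sub,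
    ← map_add]
end

section
/- Let G ⊆ ℂ×ℂ be open and let φ₁, φ₂ : ℂ×ℂ → ℂ be ℂ-differentiable on G and satisfy the bicomplex Cauchy–Riemann equations on G. Define iterated a-derivatives by φₖ⁽⁰⁾ = φₖ and φₖ⁽ⁿ⁺¹⁾(p) = ∂φₖ⁽ⁿ⁾/∂a (p). Then for every natural number n, the functions φ₁⁽ⁿ⁾ and φ₂⁽ⁿ⁾ are ℂ-differentiable on G and satisfy the bicomplex Cauchy–Riemann equations on G. (A holomorphic bicomplex function possesses derivatives of all orders, each of them holomorphic.) -/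
/-- The partial derivative operator with respect to the first (complex) variable. -/
noncomputable def Da (φ : ℂ × ℂ → ℂ) : ℂ × ℂ → ℂ := fun p => fderiv ℂ φ p (1, 0)

/-!
With `ψ± = φ₁ ± i φ₂`, the Cauchy–Riemann equations say exactly that the derivative of `ψ±`
kills the direction `(∓i, 1)`. Hence `ψ±` is locally a holomorphic function of the single
variable `a ± i b`, so it is analytic, and so are `φ₁` and `φ₂`. Analyticity makes `Da φₖ`
differentiable, and symmetry of second derivatives turns the Cauchy–Riemann equations for
`φ₁, φ₂` into those for `Da φ₁, Da φ₂`; the theorem follows by induction on `n`.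
-/

open Complex Metric Filter Topology ContinuousLinearMap

section SecondDerivative

variable {𝕜 E F : Type*} [NontriviallyNormedField 𝕜] [NormedAddCommGroup E] [NormedSpace 𝕜 E]
  [NormedAddCommGroup F] [NormedSpace 𝕜 F] [CompleteSpace F] {f : E → F} {p : E}

theorem AnalyticAt.fderiv_fderiv_apply_comm (hf : AnalyticAt 𝕜 f p) (v w : E) :
    fderiv 𝕜 (fun q => fderiv 𝕜 f q v) p w = fderiv 𝕜 (fun q => fderiv 𝕜 f q w) p v := by
  have hd := hf.fderiv.differentiableAt
  simp only [fderiv_clm_apply hd (differentiableAt_const _), fderiv_fun_const, Pi.zero_apply,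
    comp_zero, zero_add, flip_apply]
  exact hf.contDiffAt.isSymmSndFDerivAt_of_omega w v

end SecondDerivative

section ProductPlane

variable {F : Type*} [NormedAddCommGroup F] [NormedSpace ℂ F] [CompleteSpace F]
  {f : ℂ × ℂ → F} {p : ℂ × ℂ}

theorem analyticAt_of_fderiv_apply_zero_one_eq_zero
    (hd : ∀ᶠ q in 𝓝 p, DifferentiableAt ℂ f q) (h0 : ∀ᶠ q in 𝓝 p, fderiv ℂ f q (0, 1) = 0) :
    AnalyticAt ℂ f p := by
  obtain ⟨r, hr, hball⟩ := eventually_nhds_iff_ball.1 (hd.and h0)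
  have hbox : ∀ z ∈ ball p.1 r, ∀ w ∈ ball p.2 r,
      DifferentiableAt ℂ f (z, w) ∧ fderiv ℂ f (z, w) (0, 1) = 0 :=
    fun z hz w hw => hball _ (by rw [← ball_prod_same]; exact ⟨hz, hw⟩)
  have hslice : ∀ z ∈ ball p.1 r, ∀ w ∈ ball p.2 r, f (z, w) = f (z, p.2) := by
    intro z hz w hw
    have hderiv : ∀ u ∈ ball p.2 r,
        HasDerivAt (fun u => f (z, u)) (fderiv ℂ f (z, u) (0, 1)) u := fun u hu =>
      (hbox z hz u hu).1.hasFDerivAt.comp_hasDerivAt u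
        ((hasDerivAt_const u z).prodMk (hasDerivAt_id u))
    refine isOpen_ball.is_const_of_deriv_eq_zero (convex_ball _ _).isPreconnected
      (fun u hu => (hderiv u hu).differentiableAt.differentiableWithinAt) (fun u hu => ?_)
      hw (mem_ball_self hr)
    rw [(hderiv u hu).deriv]
    exact (hbox z hz u hu).2
  have hk : AnalyticAt ℂ (fun z => f (z, p.2)) p.1 := by
    refine DifferentiableOn.analyticAt (s := ball p.1 r) (fun z hz => ?_) (ball_mem_nhds _ hr)
    exact ((hbox z hz p.2 (mem_ball_self hr)).1.comp z
      (differentiableAt_id.prodMk (differentiableAt_const _))).differentiableWithinAt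
  refine (hk.comp analyticAt_fst).congr ?_
  filter_upwards [ball_mem_nhds p hr] with q hq
  rw [← ball_prod_same] at hq
  exact (hslice q.1 hq.1 q.2 hq.2).symm

theorem analyticAt_of_fderiv_apply_eq_zero (τ : ℂ) (hd : ∀ᶠ q in 𝓝 p, DifferentiableAt ℂ f q)
    (h0 : ∀ᶠ q in 𝓝 p, fderiv ℂ f q (τ, 1) = 0) : AnalyticAt ℂ f p := by
  let T : ℂ × ℂ →L[ℂ] ℂ × ℂ := (fst ℂ ℂ ℂ + τ • snd ℂ ℂ ℂ).prod (snd ℂ ℂ ℂ)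
  let S : ℂ × ℂ →L[ℂ] ℂ × ℂ := (fst ℂ ℂ ℂ - τ • snd ℂ ℂ ℂ).prod (snd ℂ ℂ ℂ)
  have hTS : ∀ q, T (S q) = q := fun q => by simp [T, S]
  have hT : Tendsto T (𝓝 (S p)) (𝓝 p) := by
    simpa only [hTS] using T.continuous.tendsto (S p)
  have hfT : AnalyticAt ℂ (f ∘ T) (S p) := by
    refine analyticAt_of_fderiv_apply_zero_one_eq_zero ?_ ?_
    · exact (hT.eventually hd).mono fun q hq => hq.comp q T.differentiableAt
    · filter_upwards [hT.eventually (hd.and h0)] with q hq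
      rw [fderiv_comp q hq.1 T.differentiableAt, T.fderiv]
      simpa [T] using hq.2
  simpa [Function.comp_def, hTS] using hfT.comp (S.analyticAt p)

end ProductPlane

def BicomplexHolomorphicOn (φ₁ φ₂ : ℂ × ℂ → ℂ) (G : Set (ℂ × ℂ)) : Prop :=
  ∀ p ∈ G, DifferentiableAt ℂ φ₁ p ∧ DifferentiableAt ℂ φ₂ p ∧
    fderiv ℂ φ₁ p (1, 0) = fderiv ℂ φ₂ p (0, 1) ∧ fderiv ℂ φ₂ p (1, 0) = -fderiv ℂ φ₁ p (0, 1)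

namespace BicomplexHolomorphicOn

variable {φ₁ φ₂ : ℂ × ℂ → ℂ} {G : Set (ℂ × ℂ)}

theorem analyticOnNhd_add_mul (h : BicomplexHolomorphicOn φ₁ φ₂ G) (hG : IsOpen G) {c : ℂ}
    (hc : c ^ 2 = -1) : AnalyticOnNhd ℂ (fun q => φ₁ q + c * φ₂ q) G := by
  intro p hp
  refine analyticAt_of_fderiv_apply_eq_zero (-c) ?_ ?_
  · filter_upwards [hG.mem_nhds hp] with q hq using (h q hq).1.add ((h q hq).2.1.const_mul c)
  · filter_upwards [hG.mem_nhds hp] with q hq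
    obtain ⟨h₁, h₂, hcr₁, hcr₂⟩ := h q hq
    have hdir : ((-c, 1) : ℂ × ℂ) = -c • (1, 0) + (0, 1) := by simp
    -- the Cauchy–Riemann equations reduce this derivative to `(1 + c ^ 2) • ∂φ₁/∂b`
    rw [fderiv_fun_add h₁ (h₂.const_mul c), fderiv_const_mul h₂]
    simp only [add_apply, smul_apply, hdir, map_add, map_smul, hcr₁, hcr₂, smul_eq_mul]
    linear_combination fderiv ℂ φ₁ q (0, 1) * hc

theorem analyticOnNhd (h : BicomplexHolomorphicOn φ₁ φ₂ G) (hG : IsOpen G) :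
    AnalyticOnNhd ℂ φ₁ G ∧ AnalyticOnNhd ℂ φ₂ G := by
  have hI := h.analyticOnNhd_add_mul hG I_sq
  have hnI := h.analyticOnNhd_add_mul hG (by rw [neg_sq, I_sq])
  refine ⟨((hI.add hnI).div_const (c := (2 : ℂ))).congr hG fun q _ => ?_,
    ((hI.sub hnI).div_const (c := 2 * I)).congr hG fun q _ => ?_⟩
  · simp only [Pi.add_apply]
    ring
  · simp only [Pi.sub_apply]
    field_simp
    ring

theorem da (h : BicomplexHolomorphicOn φ₁ φ₂ G) (hG : IsOpen G) :
    BicomplexHolomorphicOn (Da φ₁) (Da φ₂) G := by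
  intro p hp
  obtain ⟨hA₁, hA₂⟩ := h.analyticOnNhd hG
  have hDa : ∀ {φ : ℂ × ℂ → ℂ}, AnalyticAt ℂ φ p → DifferentiableAt ℂ (Da φ) p :=
    fun hφ => hφ.fderiv.differentiableAt.clm_apply (differentiableAt_const _)
  have hE₁ : Da φ₁ =ᶠ[𝓝 p] fun q => fderiv ℂ φ₂ q (0, 1) := by
    filter_upwards [hG.mem_nhds hp] with q hq using (h q hq).2.2.1
  have hE₂ : Da φ₂ =ᶠ[𝓝 p] fun q => -fderiv ℂ φ₁ q (0, 1) := by
    filter_upwards [hG.mem_nhds hp] with q hq using (h q hq).2.2.2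
  refine ⟨hDa (hA₁ p hp), hDa (hA₂ p hp), ?_, ?_⟩
  · rw [hE₁.fderiv_eq]
    exact (hA₂ p hp).fderiv_fderiv_apply_comm _ _
  · rw [hE₂.fderiv_eq, fderiv_fun_neg, neg_apply, (hA₁ p hp).fderiv_fderiv_apply_comm]
    rfl

end BicomplexHolomorphicOn

theorem bicomplex_holomorphic_has_all_derivatives (G : Set (ℂ × ℂ)) (hG : IsOpen G)
    (φ₁ φ₂ : ℂ × ℂ → ℂ)
    (hd₁ : ∀ p ∈ G, DifferentiableAt ℂ φ₁ p)
    (hd₂ : ∀ p ∈ G, DifferentiableAt ℂ φ₂ p)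
    (hcr₁ : ∀ p ∈ G, fderiv ℂ φ₁ p (1, 0) = fderiv ℂ φ₂ p (0, 1))
    (hcr₂ : ∀ p ∈ G, fderiv ℂ φ₂ p (1, 0) = -fderiv ℂ φ₁ p (0, 1)) :
    ∀ n : ℕ, ∀ p ∈ G,
      DifferentiableAt ℂ (Da^[n] φ₁) p ∧ DifferentiableAt ℂ (Da^[n] φ₂) p ∧
      fderiv ℂ (Da^[n] φ₁) p (1, 0) = fderiv ℂ (Da^[n] φ₂) p (0, 1) ∧
      fderiv ℂ (Da^[n] φ₂) p (1, 0) = -fderiv ℂ (Da^[n] φ₁) p (0, 1) := by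
  intro n
  show BicomplexHolomorphicOn (Da^[n] φ₁) (Da^[n] φ₂) G
  induction n with
  | zero => exact fun p hp => ⟨hd₁ p hp, hd₂ p hp, hcr₁ p hp, hcr₂ p hp⟩
  | succ n ih =>
    rw [Function.iterate_succ_apply', Function.iterate_succ_apply']
    exact ih.da hG
end

section
/- Let G ⊆ ℂ×ℂ be open, let Φ₁, Φ₂ : ℂ×ℂ → ℂ be ℂ-differentiable on G and satisfy the bicomplex Cauchy–Riemann equations on G, and set ψ(p) = (∂Φ₁/∂a (p), ∂Φ₂/∂a (p)) (the bicomplex derivative of Ψ = (Φ₁,Φ₂)). Then for every continuously differentiable curve p : [r,s] → G one has ∫_r^s ψ(p(t)) ⊙ p′(t) dt = Ψ(p(s)) − Ψ(p(r)); in particular the bicomplex line integral of ψ depends only on the end points of the curve, and vanishes over every closed curve. -/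
open Metric MeasureTheory Set Filter Asymptotics Topology

theorem Complex.isBigO_fderiv_one {E F : Type*} [NormedAddCommGroup E] [NormedSpace ℂ E]
    [NormedAddCommGroup F] [NormedSpace ℂ F] {f : E → F} {x : E}
    (hf : ∀ᶠ y in 𝓝 x, DifferentiableAt ℂ f y) :
    fderiv ℂ f =O[𝓝 x] fun _ ↦ (1 : ℝ) := by
  obtain ⟨R, hR, hdiff⟩ := eventually_nhds_iff_ball.1 hf
  obtain ⟨δ, hδ, hclose⟩ := Metric.continuousAt_iff.1 hf.self_of_nhds.continuousAt 1 one_pos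
  set ρ := min R δ / 2 with hρ_def
  have hρ : 0 < ρ := by positivity
  refine IsBigO.of_bound (2 / ρ) (eventually_nhds_iff_ball.2 ⟨ρ, hρ, fun y hy ↦ ?_⟩)
  have hball : ball y ρ ⊆ ball x (min R δ) := by
    intro z hz
    rw [mem_ball] at hy hz ⊢
    linarith [dist_triangle z y x, hρ_def]
  have hmaps : MapsTo f (ball y ρ) (closedBall (f y) 2) := by
    intro z hz
    have hz' := hball hz
    have hy' := hball (mem_ball_self hρ)
    rw [mem_ball, lt_min_iff] at hz' hy'
    rw [mem_closedBall]
    linarith [dist_triangle_right (f z) (f y) (f x), hclose hz'.2, hclose hy'.2]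
  have hd : DifferentiableOn ℂ f (ball y ρ) := fun z hz ↦
    (hdiff z (ball_subset_ball (min_le_left R δ) (hball hz))).differentiableWithinAt
  simpa using Complex.norm_fderiv_le_div_of_mapsTo_ball hd hmaps hρ

theorem IsCompact.integrableOn_of_isBigO_one {X E : Type*} [TopologicalSpace X]
    [MeasurableSpace X] [OpensMeasurableSpace X] [NormedAddCommGroup E] {μ : Measure X}
    [IsLocallyFiniteMeasure μ] {f : X → E} {K : Set X} (hK : IsCompact K) (hKm : MeasurableSet K)
    (hfm : AEStronglyMeasurable f (μ.restrict K))
    (hf : ∀ x ∈ K, f =O[𝓝[K] x] fun _ ↦ (1 : ℝ)) :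
    IntegrableOn f K μ := by
  refine LocallyIntegrableOn.integrableOn_isCompact (fun x hx ↦ ?_) hK
  have := hKm.nhdsWithin_isMeasurablyGenerated x
  exact (Measure.finiteAt_nhdsWithin μ x K).integrableAtFilter ⟨K, self_mem_nhdsWithin, hfm⟩
    ((isBigO_one_iff ℝ).1 (hf x hx))

theorem norm_bmul_le (u w : ℂ × ℂ) : ‖bmul u w‖ ≤ 2 * ‖u‖ * ‖w‖ := by
  have hu₁ := norm_fst_le u
  have hu₂ := norm_snd_le u
  have hw₁ := norm_fst_le w
  have hw₂ := norm_snd_le w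
  rw [bmul, Prod.norm_def]
  refine max_le ((norm_sub_le _ _).trans ?_) ((norm_add_le _ _).trans ?_) <;>
  · rw [norm_mul, norm_mul, mul_assoc, two_mul]
    gcongr

theorem continuous_bmul : Continuous (Function.uncurry bmul) := by
  unfold bmul
  fun_prop

theorem Asymptotics.IsBigO.bmul {α : Type*} {l : Filter α} {u w : α → ℂ × ℂ} {f g : α → ℝ}
    (hu : u =O[l] f) (hw : w =O[l] g) : (fun x ↦ bmul (u x) (w x)) =O[l] fun x ↦ f x * g x := by
  refine (IsBigO.of_bound 2 (Eventually.of_forall fun x ↦ ?_)).trans (hu.norm_left.mul hw.norm_left)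
  simpa [mul_assoc] using norm_bmul_le (u x) (w x)

theorem ContinuousLinearMap.prod_apply_eq_bmul {L₁ L₂ : (ℂ × ℂ) →L[ℂ] ℂ}
    (h₁ : L₁ (1, 0) = L₂ (0, 1)) (h₂ : L₂ (1, 0) = -L₁ (0, 1)) (v : ℂ × ℂ) :
    L₁.prod L₂ v = bmul (L₁ (1, 0), L₂ (1, 0)) v := by
  have hv : v = v.1 • ((1 : ℂ), (0 : ℂ)) + v.2 • ((0 : ℂ), (1 : ℂ)) := by ext <;> simp
  rw [hv]
  simp only [ContinuousLinearMap.prod_apply, map_add, map_smul, bmul, h₁, h₂]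
  ext <;> simp <;> ring

theorem HasDerivAt.bicomplex_comp {Φ₁ Φ₂ : ℂ × ℂ → ℂ} {p : ℝ → ℂ × ℂ} {v : ℂ × ℂ} {t : ℝ}
    (h₁ : DifferentiableAt ℂ Φ₁ (p t)) (h₂ : DifferentiableAt ℂ Φ₂ (p t))
    (hcr₁ : fderiv ℂ Φ₁ (p t) (1, 0) = fderiv ℂ Φ₂ (p t) (0, 1))
    (hcr₂ : fderiv ℂ Φ₂ (p t) (1, 0) = -fderiv ℂ Φ₁ (p t) (0, 1)) (hp : HasDerivAt p v t) :
    HasDerivAt (fun u ↦ (Φ₁ (p u), Φ₂ (p u)))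
      (bmul (fderiv ℂ Φ₁ (p t) (1, 0), fderiv ℂ Φ₂ (p t) (1, 0)) v) t := by
  rw [← ContinuousLinearMap.prod_apply_eq_bmul hcr₁ hcr₂]
  exact ((h₁.hasFDerivAt.prodMk h₂.hasFDerivAt).restrictScalars ℝ).comp_hasDerivAt t hp

theorem integrableOn_Icc_bmul {ψ : ℂ × ℂ → ℂ × ℂ} {p p' : ℝ → ℂ × ℂ} {r s : ℝ}
    (hψm : Measurable ψ) (hψ : ∀ t ∈ Icc r s, ψ =O[𝓝 (p t)] fun _ ↦ (1 : ℝ))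
    (hp : ContinuousOn p (Icc r s)) (hp' : ContinuousOn p' (Icc r s)) :
    IntegrableOn (fun t ↦ bmul (ψ (p t)) (p' t)) (Icc r s) := by
  refine isCompact_Icc.integrableOn_of_isBigO_one measurableSet_Icc ?_ fun t ht ↦ ?_
  · have hψp : AEMeasurable (fun t ↦ ψ (p t)) (volume.restrict (Icc r s)) :=
      hψm.comp_aemeasurable (hp.aemeasurable measurableSet_Icc)
    have hp'm := hp'.aemeasurable (μ := volume) measurableSet_Icc
    exact continuous_bmul.comp_aestronglyMeasurable₂ hψp.aestronglyMeasurable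
      hp'm.aestronglyMeasurable
  · simpa only [Function.comp_def, mul_one] using
      ((hψ t ht).comp_tendsto (hp t ht)).bmul ((hp' t ht).tendsto.isBigO_one ℝ)

theorem bicomplex_line_integral_of_derivative (G : Set (ℂ × ℂ)) (hG : IsOpen G)
    (Φ₁ Φ₂ : ℂ × ℂ → ℂ)
    (hd₁ : ∀ q ∈ G, DifferentiableAt ℂ Φ₁ q)
    (hd₂ : ∀ q ∈ G, DifferentiableAt ℂ Φ₂ q)
    (hcr₁ : ∀ q ∈ G, fderiv ℂ Φ₁ q (1, 0) = fderiv ℂ Φ₂ q (0, 1))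
    (hcr₂ : ∀ q ∈ G, fderiv ℂ Φ₂ q (1, 0) = -fderiv ℂ Φ₁ q (0, 1))
    (ψ : ℂ × ℂ → ℂ × ℂ)
    (hψ : ∀ q, ψ q = (fderiv ℂ Φ₁ q (1, 0), fderiv ℂ Φ₂ q (1, 0)))
    (r s : ℝ) (hrs : r ≤ s) (p p' : ℝ → ℂ × ℂ)
    (hmem : ∀ t ∈ Set.Icc r s, p t ∈ G)
    (hderiv : ∀ t ∈ Set.Icc r s, HasDerivAt p (p' t) t)
    (hcont : ContinuousOn p' (Set.Icc r s)) :
    ∫ t in r..s, bmul (ψ (p t)) (p' t) =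
      (Φ₁ (p s), Φ₂ (p s)) - (Φ₁ (p r), Φ₂ (p r)) := by
  obtain rfl : ψ = fun q ↦ (fderiv ℂ Φ₁ q (1, 0), fderiv ℂ Φ₂ q (1, 0)) := funext hψ
  have hψm : Measurable fun q ↦ (fderiv ℂ Φ₁ q (1, 0), fderiv ℂ Φ₂ q (1, 0)) :=
    (measurable_fderiv_apply_const ℂ Φ₁ _).prodMk (measurable_fderiv_apply_const ℂ Φ₂ _)
  have hψ_bdd (q₀) (hq₀ : q₀ ∈ G) :
      (fun q ↦ (fderiv ℂ Φ₁ q (1, 0), fderiv ℂ Φ₂ q (1, 0))) =O[𝓝 q₀] fun _ ↦ (1 : ℝ) := by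
    have hbdd (Φ : ℂ × ℂ → ℂ) (hΦ : ∀ q ∈ G, DifferentiableAt ℂ Φ q) :
        (fun q ↦ fderiv ℂ Φ q (1, 0)) =O[𝓝 q₀] fun _ ↦ (1 : ℝ) :=
      ((ContinuousLinearMap.apply ℂ ℂ (1, 0)).isBigO_comp _ _).trans
        (Complex.isBigO_fderiv_one (mem_of_superset (hG.mem_nhds hq₀) hΦ))
    exact (hbdd Φ₁ hd₁).prod_left (hbdd Φ₂ hd₂)
  have hp : ContinuousOn p (Icc r s) := fun t ht ↦ (hderiv t ht).continuousAt.continuousWithinAt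
  have hint := integrableOn_Icc_bmul hψm (fun t ht ↦ hψ_bdd _ (hmem t ht)) hp hcont
  have hFTC := fun t ht ↦ (hderiv t ht).bicomplex_comp (hd₁ _ (hmem t ht)) (hd₂ _ (hmem t ht))
    (hcr₁ _ (hmem t ht)) (hcr₂ _ (hmem t ht))
  rw [← uIcc_of_le hrs] at hFTC
  exact intervalIntegral.integral_eq_sub_of_hasDerivAt hFTC
    ((intervalIntegrable_iff_integrableOn_Icc_of_le hrs).2 hint)
end

section
/- Let G ⊆ ℂ×ℂ be open and connected and let ψ = (φ₁,φ₂) : ℂ×ℂ → ℂ×ℂ be continuous on G. Then the bicomplex line integral of ψ vanishes over every closed continuously differentiable curve in G if and only if there exist Φ₁, Φ₂ : ℂ×ℂ → ℂ that are ℂ-differentiable on G, satisfy the bicomplex Cauchy–Riemann equations on G, and satisfy ∂Φ₁/∂a = φ₁ and ∂Φ₂/∂a = φ₂ on G (i.e. ψ is the derivative of a holomorphic bicomplex function on G). -/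
open Set intervalIntegral

/-- `3t² - 2t³` maps `[0, 1]` to itself with zero derivative at both ends. -/
def smoothStep (t : ℝ) : ℝ := 3 * t ^ 2 - 2 * t ^ 3

def smoothStepDeriv (t : ℝ) : ℝ := 6 * t - 6 * t ^ 2

theorem hasDerivAt_smoothStep (t : ℝ) : HasDerivAt smoothStep (smoothStepDeriv t) t := by
  refine (((hasDerivAt_pow 2 t).const_mul 3).sub ((hasDerivAt_pow 3 t).const_mul 2)).congr_deriv ?_
  simp only [smoothStepDeriv]
  ring

theorem continuous_smoothStepDeriv : Continuous smoothStepDeriv := by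
  unfold smoothStepDeriv; fun_prop

theorem smoothStep_mem_Icc {t : ℝ} (ht : t ∈ Icc (0 : ℝ) 1) :
    smoothStep t ∈ Icc (0 : ℝ) 1 := by
  obtain ⟨h0, h1⟩ := ht
  constructor <;> simp only [smoothStep] <;>
    nlinarith [mul_nonneg h0 h0, mul_nonneg (sub_nonneg.2 h1) (sub_nonneg.2 h1)]

section Paths

variable {E : Type*} [NormedAddCommGroup E] [NormedSpace ℝ E] {G : Set E} {x y z : E}
  {p p' q q' : ℝ → E}

theorem hasDerivAt_if_le {f g f' g' : ℝ → E} {c : ℝ} (hf : ∀ t, HasDerivAt f (f' t) t)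
    (hg : ∀ t, HasDerivAt g (g' t) t) (hfg : f c = g c) (hfg' : f' c = g' c) (t : ℝ) :
    HasDerivAt (fun t => if t ≤ c then f t else g t) (if t ≤ c then f' t else g' t) t := by
  rcases lt_trichotomy t c with htc | rfl | hct
  · rw [if_pos htc.le]
    refine (hf t).congr_of_eventuallyEq ?_
    filter_upwards [Iio_mem_nhds htc] with s hs
    rw [if_pos (le_of_lt hs)]
  · rw [if_pos le_rfl, ← hasDerivWithinAt_univ, ← Iic_union_Ici]
    refine HasDerivWithinAt.union ?_ ?_
    · exact ((hf t).hasDerivWithinAt (s := Iic t)).congr (fun s hs => if_pos hs) (if_pos le_rfl)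
    rw [hfg']
    refine ((hg t).hasDerivWithinAt (s := Ici t)).congr (fun s hs => ?_)
      (by rw [if_pos le_rfl, hfg])
    rcases (mem_Ici.1 hs).eq_or_lt with rfl | hlt
    · rw [if_pos le_rfl, hfg]
    · rw [if_neg (not_le.2 hlt)]
  · rw [if_neg (not_le.2 hct)]
    refine (hg t).congr_of_eventuallyEq ?_
    filter_upwards [Ioi_mem_nhds hct] with s hs
    rw [if_neg (not_le.2 hs)]

/-- The vanishing end velocities are what make concatenations of such paths C¹ again. -/
structure IsRestPath (G : Set E) (x y : E) (p p' : ℝ → E) : Prop where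
  hasDerivAt : ∀ t, HasDerivAt p (p' t) t
  continuous_deriv : Continuous p'
  mapsTo : MapsTo p (Icc 0 1) G
  source : p 0 = x
  target : p 1 = y
  deriv_zero : p' 0 = 0
  deriv_one : p' 1 = 0

noncomputable def pathConcat {X : Type*} (p q : ℝ → X) (t : ℝ) : X :=
  if t ≤ 1 / 2 then p (2 * t) else q (2 * t - 1)

theorem pathConcat_of_half_le {X : Type*} {p q : ℝ → X} (h : p 1 = q 0) {t : ℝ}
    (ht : 1 / 2 ≤ t) :
    pathConcat p q t = q (2 * t - 1) := by
  rcases ht.eq_or_lt with rfl | ht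
  · norm_num [pathConcat, h]
  · rw [pathConcat, if_neg (not_le.2 ht)]

theorem Continuous.pathConcat {X : Type*} [TopologicalSpace X] {p q : ℝ → X}
    (hp : Continuous p) (hq : Continuous q) (h : p 1 = q 0) :
    Continuous (pathConcat p q) :=
  Continuous.if_le (by fun_prop) (by fun_prop) continuous_id continuous_const
    fun t ht => by norm_num [ht, h]

theorem hasDerivAt_pathConcat (hp : ∀ t, HasDerivAt p (p' t) t)
    (hq : ∀ t, HasDerivAt q (q' t) t) (h : p 1 = q 0) (h' : p' 1 = q' 0) (t : ℝ) :
    HasDerivAt (pathConcat p q) (pathConcat ((2 : ℝ) • p') ((2 : ℝ) • q') t) t := by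
  have hp2 (t : ℝ) : HasDerivAt (fun t => p (2 * t)) ((2 : ℝ) • p' (2 * t)) t :=
    (hp (2 * t)).scomp t ((hasDerivAt_id' t).const_mul 2 |>.congr_deriv (mul_one 2))
  have hq2 (t : ℝ) : HasDerivAt (fun t => q (2 * t - 1)) ((2 : ℝ) • q' (2 * t - 1)) t :=
    (hq (2 * t - 1)).scomp t
      (((hasDerivAt_id' t).const_mul 2).sub_const 1 |>.congr_deriv (mul_one 2))
  exact hasDerivAt_if_le hp2 hq2 (by norm_num [h]) (by norm_num [h']) t

namespace IsRestPath

theorem continuous (hp : IsRestPath G x y p p') : Continuous p :=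
  continuous_iff_continuousAt.2 fun t => (hp.hasDerivAt t).continuousAt

theorem symm (hp : IsRestPath G x y p p') :
    IsRestPath G y x (fun t => p (1 - t)) (fun t => -p' (1 - t)) where
  hasDerivAt t :=
    (hp.hasDerivAt (1 - t)).scomp t ((hasDerivAt_id' t).const_sub 1) |>.congr_deriv (by simp)
  continuous_deriv := (hp.continuous_deriv.comp (by fun_prop)).neg
  mapsTo t ht := hp.mapsTo ⟨by linarith [ht.2], by linarith [ht.1]⟩
  source := by simpa using hp.target
  target := by simpa using hp.source
  deriv_zero := by simpa using hp.deriv_one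
  deriv_one := by simpa using hp.deriv_zero

theorem trans (hp : IsRestPath G x y p p') (hq : IsRestPath G y z q q') :
    IsRestPath G x z (pathConcat p q) (pathConcat ((2 : ℝ) • p') ((2 : ℝ) • q')) where
  hasDerivAt := hasDerivAt_pathConcat hp.hasDerivAt hq.hasDerivAt (hp.target.trans hq.source.symm)
    (by rw [hp.deriv_one, hq.deriv_zero])
  continuous_deriv := (hp.continuous_deriv.const_smul _).pathConcat
    (hq.continuous_deriv.const_smul _) (by simp [hp.deriv_one, hq.deriv_zero])
  mapsTo t ht := by
    by_cases h : t ≤ 1 / 2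
    · rw [pathConcat, if_pos h]
      exact hp.mapsTo ⟨by linarith [ht.1], by linarith⟩
    · rw [pathConcat, if_neg h]
      exact hq.mapsTo ⟨by linarith, by linarith [ht.2]⟩
  source := by norm_num [pathConcat, hp.source]
  target := by norm_num [pathConcat, hq.target]
  deriv_zero := by norm_num [pathConcat, hp.deriv_zero]
  deriv_one := by norm_num [pathConcat, hq.deriv_one]

end IsRestPath

theorem add_smul_sub_mem_segment {s : ℝ} (hs : s ∈ Icc (0 : ℝ) 1) :
    x + s • (y - x) ∈ segment ℝ x y :=
  segment_eq_image' ℝ x y ▸ mem_image_of_mem _ hs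

theorem isRestPath_segment (h : segment ℝ x y ⊆ G) :
    IsRestPath G x y (fun t => x + smoothStep t • (y - x))
      (fun t => smoothStepDeriv t • (y - x)) where
  hasDerivAt t := ((hasDerivAt_smoothStep t).smul_const (y - x)).const_add x
  continuous_deriv := continuous_smoothStepDeriv.smul continuous_const
  mapsTo t ht := h (add_smul_sub_mem_segment (smoothStep_mem_Icc ht))
  source := by simp [smoothStep]
  target := by norm_num [smoothStep]
  deriv_zero := by simp [smoothStepDeriv]
  deriv_one := by norm_num [smoothStepDeriv]

end Paths

section LineIntegral

variable {E F : Type*} [NormedAddCommGroup E] [NormedSpace ℝ E]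
  [NormedAddCommGroup F] [NormedSpace ℝ F] {G : Set E} {x y z : E} {p p' q q' : ℝ → E}
  {ω : E → E →L[ℝ] F}

noncomputable def pathIntegral (ω : E → E →L[ℝ] F) (p p' : ℝ → E) : F :=
  ∫ t in (0 : ℝ)..1, ω (p t) (p' t)

theorem IsRestPath.intervalIntegrable (hp : IsRestPath G x y p p') (hω : ContinuousOn ω G) :
    IntervalIntegrable (fun t => ω (p t) (p' t)) MeasureTheory.volume 0 1 :=
  ((hω.comp hp.continuous.continuousOn hp.mapsTo).clm_apply
    hp.continuous_deriv.continuousOn).intervalIntegrable_of_Icc zero_le_one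

theorem pathIntegral_reverse (p p' : ℝ → E) :
    pathIntegral ω (fun t => p (1 - t)) (fun t => -p' (1 - t)) = -pathIntegral ω p p' := by
  simp only [pathIntegral, map_neg, integral_neg]
  rw [integral_comp_sub_left (fun t => ω (p t) (p' t))]
  norm_num

theorem pathIntegral_pathConcat (hp : IsRestPath G x y p p') (hq : IsRestPath G y z q q')
    (hω : ContinuousOn ω G) :
    pathIntegral ω (pathConcat p q) (pathConcat ((2 : ℝ) • p') ((2 : ℝ) • q')) =
      pathIntegral ω p p' + pathIntegral ω q q' := by
  have hint := (hp.trans hq).intervalIntegrable hω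
  have hpq : p 1 = q 0 := hp.target.trans hq.source.symm
  have hpq' : ((2 : ℝ) • p') 1 = ((2 : ℝ) • q') 0 := by simp [hp.deriv_one, hq.deriv_zero]
  rw [pathIntegral, ← integral_add_adjacent_intervals (b := 1 / 2)
    (hint.mono_set (uIcc_subset_uIcc_left (by norm_num)))
    (hint.mono_set (uIcc_subset_uIcc_right (by norm_num)))]
  congr 1
  · rw [integral_congr (g := fun t => (2 : ℝ) • ω (p (2 * t)) (p' (2 * t))),
      integral_smul, smul_integral_comp_mul_left (fun t => ω (p t) (p' t))]
    · norm_num [pathIntegral]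
    intro t ht
    rw [uIcc_of_le (by norm_num)] at ht
    simp only [pathConcat, if_pos ht.2, Pi.smul_apply, map_smul]
  · rw [integral_congr (g := fun t => (2 : ℝ) • ω (q (2 * t - 1)) (q' (2 * t - 1))),
      integral_smul, integral_comp_mul_sub (fun t => ω (q t) (q' t)) two_ne_zero]
    · norm_num [pathIntegral, smul_smul]
    intro t ht
    rw [uIcc_of_le (by norm_num)] at ht
    simp [pathConcat_of_half_le hpq ht.1, pathConcat_of_half_le hpq' ht.1]

theorem pathIntegral_segment (hseg : segment ℝ x y ⊆ G) (hω : ContinuousOn ω G) :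
    pathIntegral ω (fun t => x + smoothStep t • (y - x))
        (fun t => smoothStepDeriv t • (y - x)) =
      ∫ s in (0 : ℝ)..1, ω (x + s • (y - x)) (y - x) := by
  have hg : ContinuousOn (fun s : ℝ => ω (x + s • (y - x)) (y - x)) (Icc 0 1) :=
    (hω.comp (by fun_prop) fun s hs => hseg (add_smul_sub_mem_segment hs)).clm_apply
      continuousOn_const
  have := integral_deriv_smul_comp' (a := 0) (b := 1) (fun t _ => hasDerivAt_smoothStep t)
    continuous_smoothStepDeriv.continuousOn
    (hg.mono (by rw [uIcc_of_le zero_le_one]; exact image_subset_iff.2 fun t => smoothStep_mem_Icc))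
  norm_num [pathIntegral, smoothStep] at this ⊢
  exact this

end LineIntegral

section Primitive

variable {E F : Type*} [NormedAddCommGroup E] [NormedSpace ℝ E]
  [NormedAddCommGroup F] [NormedSpace ℝ F] {G : Set E} {x y : E} {p p' q q' : ℝ → E}
  {ω : E → E →L[ℝ] F} {Φ : E → F}

theorem IsOpen.exists_isRestPath (hG : IsOpen G) (hconn : IsPreconnected G) (hx : x ∈ G)
    (hy : y ∈ G) : ∃ p p', IsRestPath G x y p p' := by
  refine hconn.induction₂ (fun x y => ∃ p p', IsRestPath G x y p p') (fun w hw => ?_)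
    (fun _ _ _ _ _ _ ⟨p, p', hp⟩ ⟨q, q', hq⟩ => ⟨_, _, hp.trans hq⟩)
    (fun _ _ _ _ ⟨p, p', hp⟩ => ⟨_, _, hp.symm⟩) hx hy
  obtain ⟨ε, hε, hball⟩ := Metric.isOpen_iff.1 hG w hw
  filter_upwards [nhdsWithin_le_nhds (Metric.ball_mem_nhds w hε)] with v hv
  exact ⟨_, _, isRestPath_segment
    (((convex_ball w ε).segment_subset (Metric.mem_ball_self hε) hv).trans hball)⟩

theorem pathIntegral_eq_of_isRestPath
    (hloop : ∀ x p p', IsRestPath G x x p p' → pathIntegral ω p p' = 0)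
    (hω : ContinuousOn ω G) (hp : IsRestPath G x y p p') (hq : IsRestPath G x y q q') :
    pathIntegral ω p p' = pathIntegral ω q q' := by
  have := hloop x _ _ (hp.trans hq.symm)
  rwa [pathIntegral_pathConcat hp hq.symm hω, pathIntegral_reverse, add_neg_eq_zero] at this

theorem hasFDerivAt_of_sub_eq_integral [CompleteSpace F] {w : E} {ε : ℝ} (hε : 0 < ε)
    (hω : ContinuousOn ω (Metric.ball w ε))
    (hΦ : ∀ h, ‖h‖ < ε → Φ (w + h) - Φ w = ∫ s in (0 : ℝ)..1, ω (w + s • h) h) :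
    HasFDerivAt Φ (ω w) w := by
  rw [hasFDerivAt_iff_isLittleO_nhds_zero, Asymptotics.isLittleO_iff]
  intro c hc
  obtain ⟨δ, hδ, hωδ⟩ := Metric.continuousOn_iff.1 hω w (Metric.mem_ball_self hε) c hc
  filter_upwards [Metric.ball_mem_nhds 0 (lt_min hδ hε)] with h hh
  rw [mem_ball_zero_iff, lt_min_iff] at hh
  have hmem {s : ℝ} (hs : s ∈ Icc (0 : ℝ) 1) : dist (w + s • h) w < min δ ε := by
    rw [dist_eq_norm, add_sub_cancel_left, norm_smul, Real.norm_of_nonneg hs.1]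
    exact lt_min ((mul_le_of_le_one_left (norm_nonneg h) hs.2).trans_lt hh.1)
      ((mul_le_of_le_one_left (norm_nonneg h) hs.2).trans_lt hh.2)
  have hint : IntervalIntegrable (fun s : ℝ => ω (w + s • h) h) MeasureTheory.volume 0 1 :=
    ((hω.comp (by fun_prop) fun s hs => (hmem hs).trans_le (min_le_right _ _)).clm_apply
      continuousOn_const).intervalIntegrable_of_Icc zero_le_one
  have hdiff : Φ (w + h) - Φ w - ω w h = ∫ s in (0 : ℝ)..1, (ω (w + s • h) - ω w) h := by
    simp only [hΦ h hh.2, sub_apply]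
    rw [integral_sub hint intervalIntegrable_const, integral_const]
    simp
  rw [hdiff]
  refine (norm_integral_le_of_norm_le_const (C := c * ‖h‖) fun s hs => ?_).trans_eq (by simp)
  have hs : s ∈ Icc (0 : ℝ) 1 := by
    rw [uIoc_of_le zero_le_one] at hs
    exact Ioc_subset_Icc_self hs
  refine (ContinuousLinearMap.le_opNorm _ _).trans (mul_le_mul_of_nonneg_right ?_ (norm_nonneg h))
  rw [← dist_eq_norm]
  exact (hωδ _ ((hmem hs).trans_le (min_le_right _ _)) ((hmem hs).trans_le (min_le_left _ _))).le

theorem exists_hasFDerivAt_of_pathIntegral_loop_eq_zero [CompleteSpace F] (hG : IsOpen G)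
    (hconn : IsConnected G) (hω : ContinuousOn ω G)
    (hloop : ∀ x p p', IsRestPath G x x p p' → pathIntegral ω p p' = 0) :
    ∃ Φ : E → F, ∀ x ∈ G, HasFDerivAt Φ (ω x) x := by
  obtain ⟨x₀, hx₀⟩ := hconn.nonempty
  choose! P P' hP using fun y (hy : y ∈ G) => hG.exists_isRestPath hconn.isPreconnected hx₀ hy
  refine ⟨fun y => pathIntegral ω (P y) (P' y), fun w hw => ?_⟩
  obtain ⟨ε, hε, hball⟩ := Metric.isOpen_iff.1 hG w hw
  refine hasFDerivAt_of_sub_eq_integral hε (hω.mono hball) fun h hh => ?_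
  have hseg : segment ℝ w (w + h) ⊆ G :=
    ((convex_ball w ε).segment_subset (Metric.mem_ball_self hε) (by simpa using hh)).trans hball
  have hwh := (hP w hw).trans (isRestPath_segment hseg)
  rw [pathIntegral_eq_of_isRestPath hloop hω (hP _ (hseg (right_mem_segment ℝ _ _))) hwh,
    pathIntegral_pathConcat (hP w hw) (isRestPath_segment hseg) hω, pathIntegral_segment hseg hω]
  simp

theorem integral_eq_sub_of_hasFDerivAt [CompleteSpace F] {r s : ℝ}
    (hΦ : ∀ x ∈ G, HasFDerivAt Φ (ω x) x) (hω : ContinuousOn ω G) (hrs : r ≤ s)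
    (hpG : ∀ t ∈ Icc r s, p t ∈ G) (hp : ∀ t ∈ Icc r s, HasDerivAt p (p' t) t)
    (hp' : ContinuousOn p' (Icc r s)) :
    ∫ t in r..s, ω (p t) (p' t) = Φ (p s) - Φ (p r) := by
  rw [← uIcc_of_le hrs] at hpG hp hp'
  have hpc : ContinuousOn p (uIcc r s) := fun t ht => (hp t ht).continuousAt.continuousWithinAt
  exact integral_eq_sub_of_hasDerivAt (fun t ht => (hΦ _ (hpG t ht)).comp_hasDerivAt t (hp t ht))
    ((hω.comp hpc hpG).clm_apply hp').intervalIntegrable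

end Primitive

/-- Written as `x.1 • id + x.2 • J` with `J v = (-v.2, v.1)`, so that continuity in `x` is
automatic. -/
noncomputable def bmulL (x : ℂ × ℂ) : (ℂ × ℂ) →L[ℂ] ℂ × ℂ :=
  x.1 • ContinuousLinearMap.id ℂ (ℂ × ℂ) +
    x.2 • (-ContinuousLinearMap.snd ℂ ℂ ℂ).prod (ContinuousLinearMap.fst ℂ ℂ ℂ)

@[simp]
theorem bmulL_apply (x y : ℂ × ℂ) : bmulL x y = bmul x y := by
  ext <;> simp [bmulL, bmul, sub_eq_add_neg, mul_comm, add_comm]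

theorem continuous_bmulL : Continuous bmulL := by
  unfold bmulL; fun_prop

theorem hasFDerivAt_bmulL_iff {Φ₁ Φ₂ : ℂ × ℂ → ℂ} {q a : ℂ × ℂ} :
    HasFDerivAt (fun y => (Φ₁ y, Φ₂ y)) (bmulL a) q ↔
      DifferentiableAt ℂ Φ₁ q ∧ DifferentiableAt ℂ Φ₂ q ∧
        fderiv ℂ Φ₁ q (1, 0) = fderiv ℂ Φ₂ q (0, 1) ∧
        fderiv ℂ Φ₂ q (1, 0) = -fderiv ℂ Φ₁ q (0, 1) ∧
        fderiv ℂ Φ₁ q (1, 0) = a.1 ∧ fderiv ℂ Φ₂ q (1, 0) = a.2 := by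
  constructor
  · intro h
    have h₁ : HasFDerivAt Φ₁ ((ContinuousLinearMap.fst ℂ ℂ ℂ).comp (bmulL a)) q := h.fst
    have h₂ : HasFDerivAt Φ₂ ((ContinuousLinearMap.snd ℂ ℂ ℂ).comp (bmulL a)) q := h.snd
    refine ⟨h₁.differentiableAt, h₂.differentiableAt, ?_⟩
    simp [h₁.fderiv, h₂.fderiv, bmul]
  · rintro ⟨h₁, h₂, hcr₁, hcr₂, ha₁, ha₂⟩
    refine (h₁.hasFDerivAt.prodMk h₂.hasFDerivAt).congr_fderiv ?_
    ext <;> simp [bmul, ← ha₁, ← ha₂, hcr₁, hcr₂]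

theorem bicomplex_path_independence_iff_primitive (G : Set (ℂ × ℂ))
    (hG : IsOpen G) (hconn : IsConnected G) (φ₁ φ₂ : ℂ × ℂ → ℂ)
    (hc : ContinuousOn (fun q => (φ₁ q, φ₂ q)) G) :
    (∀ (r s : ℝ) (p p' : ℝ → ℂ × ℂ), r ≤ s →
        (∀ t ∈ Set.Icc r s, p t ∈ G) →
        (∀ t ∈ Set.Icc r s, HasDerivAt p (p' t) t) →
        ContinuousOn p' (Set.Icc r s) →
        p r = p s →
        ∫ t in r..s, bmul (φ₁ (p t), φ₂ (p t)) (p' t) = 0) ↔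
      (∃ Φ₁ Φ₂ : ℂ × ℂ → ℂ, ∀ q ∈ G,
        DifferentiableAt ℂ Φ₁ q ∧ DifferentiableAt ℂ Φ₂ q ∧
        fderiv ℂ Φ₁ q (1, 0) = fderiv ℂ Φ₂ q (0, 1) ∧
        fderiv ℂ Φ₂ q (1, 0) = -fderiv ℂ Φ₁ q (0, 1) ∧
        fderiv ℂ Φ₁ q (1, 0) = φ₁ q ∧ fderiv ℂ Φ₂ q (1, 0) = φ₂ q) := by
  set ω : ℂ × ℂ → (ℂ × ℂ) →L[ℝ] ℂ × ℂ := fun q => (bmulL (φ₁ q, φ₂ q)).restrictScalars ℝ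
  have hω : ContinuousOn ω G :=
    (ContinuousLinearMap.restrictScalarsL ℂ (ℂ × ℂ) (ℂ × ℂ) ℝ ℝ).continuous.comp_continuousOn
      (continuous_bmulL.comp_continuousOn hc)
  constructor
  · intro hloop
    obtain ⟨Φ, hΦ⟩ := exists_hasFDerivAt_of_pathIntegral_loop_eq_zero hG hconn hω
      fun x p p' hp => by
        simpa [pathIntegral, ω] using hloop 0 1 p p' zero_le_one (fun t ht => hp.mapsTo ht)
          (fun t _ => hp.hasDerivAt t) hp.continuous_deriv.continuousOn
          (hp.source.trans hp.target.symm)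
    exact ⟨fun y => (Φ y).1, fun y => (Φ y).2, fun q hq =>
      hasFDerivAt_bmulL_iff.1 (hasFDerivAt_of_restrictScalars ℝ (hΦ q hq) rfl)⟩
  · rintro ⟨Φ₁, Φ₂, hΦ⟩ r s p p' hrs hpG hp hp' hclosed
    have := integral_eq_sub_of_hasFDerivAt
      (fun q hq => (hasFDerivAt_bmulL_iff.2 (hΦ q hq)).restrictScalars ℝ) hω hrs hpG hp hp'
    simpa [ω, hclosed] using this
end

section
/- Let G ⊆ ℂ×ℂ be open and connected and let ω₁, ω₂ : ℂ×ℂ → ℂ×ℂ be continuous on G. For a continuously differentiable curve p = (a,b) : [r,s] → G define I(p) = ∫_r^s (ω₁(p(t)) ⊙ (a′(t),0) + ω₂(p(t)) ⊙ (b′(t),0)) dt. Then I(p) = 0 for every closed continuously differentiable curve p in G if and only if there exists Ω : ℂ×ℂ → ℂ×ℂ such that at every point (a,b) ∈ G both complex components of Ω are complex differentiable in the first variable with partial derivative ∂Ω/∂a (a,b) = ω₁(a,b) (componentwise), and complex differentiable in the second variable with ∂Ω/∂b (a,b) = ω₂(a,b) (componentwise). -/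
/-!
Since `bmul w (c, 0) = c • w`, the integrand of `I(p)` is `ω (p t) (p' t)` for the ℂ-linear
1-form `ω = ω₁ da + ω₂ db`, so the claim is that a continuous 1-form on a connected open set has
a primitive iff its integrals over closed C¹ curves vanish. Given a primitive `Ω` (separate
complex differentiability with continuous partial derivatives makes `Ω` jointly differentiable),
`I(p) = Ω (p s) - Ω (p r)` by the fundamental theorem of calculus. Conversely, integrals along
C¹ paths from a base point to `y` do not depend on the path, since a path followed by the reverse
of another is a closed curve; this defines `Ω y`, and comparing with straight segments near `q`
gives `DΩ(q) = ω(q)`. Paths are parametrised with zero velocity at their endpoints, so that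
concatenations of C¹ paths are again C¹.
-/

open Set Filter Topology MeasureTheory AffineMap unitInterval ContinuousLinearMap
open scoped Convex

namespace Path

theorem extend_trans_eq_add_sub {X : Type*} [TopologicalSpace X] [AddCommGroup X] {x y z : X}
    (γ₁ : Path x y) (γ₂ : Path y z) :
    (γ₁.trans γ₂).extend = fun t ↦ γ₁.extend (2 * t) + γ₂.extend (2 * t - 1) - y := by
  ext t
  rcases le_total t (1 / 2) with ht | ht
  · rw [extend_trans_of_le_half _ _ ht, γ₂.extend_of_le_zero (by linarith), add_sub_cancel_right]
  · rw [extend_trans_of_half_le _ _ ht, γ₁.extend_of_one_le (by linarith), add_sub_cancel_left]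

variable {E : Type*} [NormedAddCommGroup E] [NormedSpace ℝ E] {G : Set E} {x y z : E}

/-- `γ.extend` is constant outside `[0, 1]`, so `ContDiff ℝ 1 γ.extend` forces the velocity to
vanish at the endpoints; this is what keeps `γ₁.trans γ₂` of class C¹. -/
structure IsC1In (G : Set E) (γ : Path x y) : Prop where
  contDiff_extend : ContDiff ℝ 1 γ.extend
  mem : ∀ t, γ t ∈ G

theorem IsC1In.symm {γ : Path x y} (hγ : γ.IsC1In G) : γ.symm.IsC1In G where
  contDiff_extend := by
    rw [extend_symm]
    exact hγ.contDiff_extend.comp (contDiff_const.sub contDiff_id)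
  mem t := hγ.mem _

theorem IsC1In.trans {γ₁ : Path x y} {γ₂ : Path y z} (h₁ : γ₁.IsC1In G) (h₂ : γ₂.IsC1In G) :
    (γ₁.trans γ₂).IsC1In G where
  contDiff_extend := by
    have := h₁.contDiff_extend
    have := h₂.contDiff_extend
    rw [extend_trans_eq_add_sub]
    fun_prop
  mem t := by
    rcases trans_range γ₁ γ₂ ▸ mem_range_self t with ⟨s, hs⟩ | ⟨s, hs⟩
    · exact hs ▸ h₁.mem s
    · exact hs ▸ h₂.mem s

noncomputable def smoothSegment (x y : E) : Path x y :=
  ofLine (f := fun t ↦ lineMap x y (Real.smoothTransition t)) (by fun_prop) (by simp) (by simp)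

theorem extend_smoothSegment (x y : E) :
    (smoothSegment x y).extend = fun t ↦ lineMap x y (Real.smoothTransition t) := by
  ext t
  simp [smoothSegment, Path.extend, IccExtend, ofLine]

theorem isC1In_smoothSegment (h : [x -[ℝ] y] ⊆ G) : (smoothSegment x y).IsC1In G where
  contDiff_extend := by
    rw [extend_smoothSegment]
    simp only [lineMap_apply_module']
    fun_prop
  mem t := h <| by
    rw [segment_eq_image_lineMap]
    exact ⟨_, ⟨Real.smoothTransition.nonneg t, Real.smoothTransition.le_one t⟩, rfl⟩

theorem exists_isC1In (hG : IsOpen G) (hconn : IsPreconnected G) (hx : x ∈ G) (hy : y ∈ G) :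
    ∃ γ : Path x y, γ.IsC1In G := by
  refine hconn.induction₂ (fun x y ↦ ∃ γ : Path x y, γ.IsC1In G) (fun a ha ↦ ?_)
    (fun a b c _ _ _ ⟨γ₁, h₁⟩ ⟨γ₂, h₂⟩ ↦ ⟨γ₁.trans γ₂, h₁.trans h₂⟩)
    (fun a b _ _ ⟨γ, h⟩ ↦ ⟨γ.symm, h.symm⟩) hx hy
  obtain ⟨ε, hε, hball⟩ := Metric.isOpen_iff.1 hG a ha
  filter_upwards [mem_nhdsWithin_of_mem_nhds (Metric.ball_mem_nhds a hε)] with b hb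
  exact ⟨_, isC1In_smoothSegment <|
    ((convex_ball a ε).segment_subset (Metric.mem_ball_self hε) hb).trans hball⟩

section CurveIntegral

variable {F : Type*} [NormedAddCommGroup F] [NormedSpace ℝ F] {ω : E → E →L[ℝ] F}

theorem IsC1In.curveIntegrable {γ : Path x y} (hγ : γ.IsC1In G) (hω : ContinuousOn ω G) :
    CurveIntegrable ω γ :=
  hω.curveIntegrable_of_contDiffOn hγ.contDiff_extend.contDiffOn hγ.mem

theorem curveIntegral_smoothSegment (hω : ContinuousOn ω [x -[ℝ] y]) :
    ∫ᶜ z in smoothSegment x y, ω z = ∫ᶜ z in .segment x y, ω z := by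
  have hφ : ∀ t, HasDerivAt Real.smoothTransition (deriv Real.smoothTransition t) t := fun t ↦
    ((Real.smoothTransition.contDiff (n := 1)).differentiable one_ne_zero t).hasDerivAt
  have hg : ContinuousOn (fun s ↦ ω (lineMap x y s) (y - x)) I := by
    refine (hω.comp (by fun_prop) fun s hs ↦ ?_).clm_apply continuousOn_const
    rw [segment_eq_image_lineMap]
    exact mem_image_of_mem _ hs
  rw [curveIntegral_eq_intervalIntegral_deriv, curveIntegral_segment, extend_smoothSegment]
  have hd : ∀ t, deriv (fun t ↦ lineMap x y (Real.smoothTransition t)) t =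
      deriv Real.smoothTransition t • (y - x) := fun t ↦
    (hasDerivAt_lineMap.scomp t (hφ t)).deriv
  beta_reduce
  simp only [hd, map_smul]
  simpa using intervalIntegral.integral_deriv_smul_comp' (a := 0) (b := 1) (fun t _ ↦ hφ t)
    ((Real.smoothTransition.contDiff (n := 1)).continuous_deriv le_rfl).continuousOn
    (hg.mono (image_subset_iff.2 fun t _ ↦ ⟨Real.smoothTransition.nonneg t,
      Real.smoothTransition.le_one t⟩))

theorem curveIntegral_eq_of_isC1In (hω : ContinuousOn ω G)
    (h : ∀ x (γ : Path x x), γ.IsC1In G → ∫ᶜ z in γ, ω z = 0) {γ₁ γ₂ : Path x y}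
    (h₁ : γ₁.IsC1In G) (h₂ : γ₂.IsC1In G) : ∫ᶜ z in γ₁, ω z = ∫ᶜ z in γ₂, ω z := by
  have := h x _ (h₁.trans h₂.symm)
  rwa [curveIntegral_trans (h₁.curveIntegrable hω) (h₂.symm.curveIntegrable hω),
    curveIntegral_symm, ← sub_eq_add_neg, sub_eq_zero] at this

end CurveIntegral

end Path

section Primitive

variable {E F : Type*} [NormedAddCommGroup E] [NormedSpace ℝ E] [NormedAddCommGroup F]
  [NormedSpace ℝ F] {G : Set E} {ω : E → E →L[ℝ] F}

open Path

theorem exists_forall_sub_eq_curveIntegral (hG : IsOpen G) (hconn : IsConnected G)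
    (hω : ContinuousOn ω G) (h : ∀ x (γ : Path x x), γ.IsC1In G → ∫ᶜ z in γ, ω z = 0) :
    ∃ Φ : E → F, ∀ x y (γ : Path x y), γ.IsC1In G → Φ y - Φ x = ∫ᶜ z in γ, ω z := by
  obtain ⟨q₀, hq₀⟩ := hconn.nonempty
  choose γ hγ using fun y (hy : y ∈ G) ↦ exists_isC1In hG hconn.isPreconnected hq₀ hy
  classical
  refine ⟨fun y ↦ if hy : y ∈ G then ∫ᶜ z in γ y hy, ω z else 0, fun x y δ hδ ↦ ?_⟩
  have hx : x ∈ G := δ.source ▸ hδ.mem 0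
  have hy : y ∈ G := δ.target ▸ hδ.mem 1
  simp only [dif_pos hx, dif_pos hy]
  rw [curveIntegral_eq_of_isC1In hω h (hγ y hy) ((hγ x hx).trans hδ),
    curveIntegral_trans ((hγ x hx).curveIntegrable hω) (hδ.curveIntegrable hω),
    add_sub_cancel_left]

theorem hasFDerivAt_of_forall_sub_eq_curveIntegral [CompleteSpace F] (hG : IsOpen G)
    (hω : ContinuousOn ω G) {Φ : E → F} {q : E}
    (hΦ : ∀ y (γ : Path q y), γ.IsC1In G → Φ y - Φ q = ∫ᶜ z in γ, ω z) (hq : q ∈ G) :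
    HasFDerivAt Φ (ω q) q := by
  obtain ⟨ε, hε, hball⟩ := Metric.isOpen_iff.1 hG q hq
  have hΦ' : Φ =ᶠ[𝓝 q] fun y ↦ Φ q + ∫ᶜ z in .segment q y, ω z := by
    filter_upwards [Metric.ball_mem_nhds q hε] with y hy
    have hseg : [q -[ℝ] y] ⊆ G :=
      ((convex_ball q ε).segment_subset (Metric.mem_ball_self hε) hy).trans hball
    rw [← curveIntegral_smoothSegment (hω.mono hseg), ← hΦ y _ (isC1In_smoothSegment hseg),
      add_sub_cancel]
  refine ((HasFDerivAt.curveIntegral_segment_source' ?_).const_add (Φ q)).congr_of_eventuallyEq hΦ'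
  filter_upwards [hG.mem_nhds hq] with z hz using hω.continuousAt (hG.mem_nhds hz)

theorem integral_eq_sub_of_forall_hasFDerivAt [CompleteSpace F] (hω : ContinuousOn ω G)
    {Φ : E → F} (hΦ : ∀ q ∈ G, HasFDerivAt Φ (ω q) q) {r s : ℝ} {p p' : ℝ → E} (hrs : r ≤ s)
    (hpG : ∀ t ∈ Icc r s, p t ∈ G) (hp : ∀ t ∈ Icc r s, HasDerivAt p (p' t) t)
    (hp' : ContinuousOn p' (Icc r s)) :
    ∫ t in r..s, ω (p t) (p' t) = Φ (p s) - Φ (p r) := by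
  rw [← uIcc_of_le hrs] at hpG hp hp'
  refine intervalIntegral.integral_eq_sub_of_hasDerivAt
    (fun t ht ↦ (hΦ _ (hpG t ht)).comp_hasDerivAt t (hp t ht)) ?_
  exact ((hω.comp (HasDerivAt.continuousOn hp) fun t ht ↦ hpG t ht).clm_apply
    hp').intervalIntegrable

theorem integral_closed_curve_eq_zero_iff_exists_hasFDerivAt [CompleteSpace F] (hG : IsOpen G)
    (hconn : IsConnected G) (hω : ContinuousOn ω G) :
    (∀ (r s : ℝ) (p p' : ℝ → E), r ≤ s → (∀ t ∈ Icc r s, p t ∈ G) →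
        (∀ t ∈ Icc r s, HasDerivAt p (p' t) t) → ContinuousOn p' (Icc r s) → p r = p s →
        ∫ t in r..s, ω (p t) (p' t) = 0) ↔
      ∃ Φ : E → F, ∀ q ∈ G, HasFDerivAt Φ (ω q) q := by
  constructor
  · intro H
    have hclosed : ∀ x (γ : Path x x), γ.IsC1In G → ∫ᶜ z in γ, ω z = 0 := fun x γ hγ ↦ by
      rw [curveIntegral_eq_intervalIntegral_deriv]
      exact H 0 1 _ _ zero_le_one (fun t _ ↦ hγ.mem _)
        (fun t _ ↦ (hγ.contDiff_extend.differentiable one_ne_zero t).hasDerivAt)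
        (hγ.contDiff_extend.continuous_deriv le_rfl).continuousOn (by simp)
    obtain ⟨Φ, hΦ⟩ := exists_forall_sub_eq_curveIntegral hG hconn hω hclosed
    exact ⟨Φ, fun q ↦ hasFDerivAt_of_forall_sub_eq_curveIntegral hG hω (hΦ q)⟩
  · rintro ⟨Φ, hΦ⟩ r s p p' hrs hpG hp hp' hclosed
    rw [integral_eq_sub_of_forall_hasFDerivAt hω hΦ hrs hpG hp hp', hclosed, sub_self]

end Primitive

section PartialDerivatives

variable {𝕜 E₁ E₂ F : Type*} [RCLike 𝕜] [NormedAddCommGroup E₁] [NormedSpace 𝕜 E₁]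
  [NormedAddCommGroup E₂] [NormedSpace 𝕜 E₂] [NormedAddCommGroup F] [NormedSpace 𝕜 F]

theorem IsOpen.forall_hasFDerivAt_coprod_iff {G : Set (E₁ × E₂)} (hG : IsOpen G)
    {f : E₁ × E₂ → F} {f₁ : E₁ × E₂ → E₁ →L[𝕜] F} {f₂ : E₁ × E₂ → E₂ →L[𝕜] F}
    (hf₁ : ContinuousOn f₁ G) (hf₂ : ContinuousOn f₂ G) :
    (∀ q ∈ G, HasFDerivAt f ((f₁ q).coprod (f₂ q)) q) ↔
      ∀ q ∈ G, HasFDerivAt (fun z ↦ f (z, q.2)) (f₁ q) q.1 ∧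
        HasFDerivAt (fun z ↦ f (q.1, z)) (f₂ q) q.2 := by
  refine ⟨fun h q hq ↦ ⟨?_, ?_⟩, fun h q hq ↦ ?_⟩
  · have hq : HasFDerivAt f _ (q.1, q.2) := h q hq
    simpa [Function.comp_def] using hq.comp q.1 (hasFDerivAt_prodMk_left (𝕜 := 𝕜) q.1 q.2)
  · have hq : HasFDerivAt f _ (q.1, q.2) := h q hq
    simpa [Function.comp_def] using hq.comp q.2 (hasFDerivAt_prodMk_right (𝕜 := 𝕜) q.1 q.2)
  · exact (hasStrictFDerivAt_uncurry_coprod (f := Function.curry f) (f₁ := Function.curry f₁)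
      (f₂ := Function.curry f₂) (eventually_of_mem (hG.mem_nhds hq) fun v hv ↦ (h v hv).1)
      (eventually_of_mem (hG.mem_nhds hq) fun v hv ↦ (h v hv).2)
      (hf₁.continuousAt (hG.mem_nhds hq)) (hf₂.continuousAt (hG.mem_nhds hq))).hasFDerivAt

end PartialDerivatives

theorem hasDerivAt_prod_iff {𝕜 F₁ F₂ : Type*} [NontriviallyNormedField 𝕜] [NormedAddCommGroup F₁]
    [NormedSpace 𝕜 F₁] [NormedAddCommGroup F₂] [NormedSpace 𝕜 F₂] {f : 𝕜 → F₁ × F₂}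
    {v : F₁ × F₂} {x : 𝕜} :
    HasDerivAt f v x ↔ HasDerivAt (fun z ↦ (f z).1) v.1 x ∧ HasDerivAt (fun z ↦ (f z).2) v.2 x :=
  ⟨fun h ↦ ⟨(hasFDerivAt_fst (𝕜 := 𝕜) (p := f x)).comp_hasDerivAt x h,
      (hasFDerivAt_snd (𝕜 := 𝕜) (p := f x)).comp_hasDerivAt x h⟩,
    fun h ↦ h.1.prodMk h.2⟩

/-- `ω₁ da + ω₂ db` as a ℂ-linear 1-form on `ℂ × ℂ`. -/
noncomputable def bicomplexForm (ω₁ ω₂ : ℂ × ℂ → ℂ × ℂ) (q : ℂ × ℂ) : ℂ × ℂ →L[ℂ] ℂ × ℂ :=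
  (toSpanSingleton ℂ (ω₁ q)).coprod (toSpanSingleton ℂ (ω₂ q))

theorem bmul_mk_zero (w : ℂ × ℂ) (c : ℂ) : bmul w (c, 0) = c • w := by
  simp [bmul, Prod.ext_iff, mul_comm]

theorem bicomplexForm_apply (ω₁ ω₂ : ℂ × ℂ → ℂ × ℂ) (q v : ℂ × ℂ) :
    bicomplexForm ω₁ ω₂ q v = bmul (ω₁ q) (v.1, 0) + bmul (ω₂ q) (v.2, 0) := by
  simp [bicomplexForm, bmul_mk_zero]

theorem ContinuousOn.toSpanSingleton {X 𝕜 E : Type*} [TopologicalSpace X]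
    [NontriviallyNormedField 𝕜] [NormedAddCommGroup E] [NormedSpace 𝕜 E] {s : Set X} {f : X → E}
    (h : ContinuousOn f s) : ContinuousOn (fun x ↦ toSpanSingleton 𝕜 (f x)) s :=
  (toSpanSingletonCLE (𝕜 := 𝕜)).continuous.comp_continuousOn h

theorem ContinuousOn.bicomplexForm {G : Set (ℂ × ℂ)} {ω₁ ω₂ : ℂ × ℂ → ℂ × ℂ}
    (h₁ : ContinuousOn ω₁ G) (h₂ : ContinuousOn ω₂ G) : ContinuousOn (bicomplexForm ω₁ ω₂) G := by
  unfold _root_.bicomplexForm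
  simp only [← comp_fst_add_comp_snd]
  exact ((h₁.toSpanSingleton (𝕜 := ℂ)).clm_comp continuousOn_const).add
    ((h₂.toSpanSingleton (𝕜 := ℂ)).clm_comp continuousOn_const)

theorem bicomplex_exact_differential_iff_path_independent (G : Set (ℂ × ℂ))
    (hG : IsOpen G) (hconn : IsConnected G) (ω₁ ω₂ : ℂ × ℂ → ℂ × ℂ)
    (hc₁ : ContinuousOn ω₁ G) (hc₂ : ContinuousOn ω₂ G) :
    (∀ (r s : ℝ) (p p' : ℝ → ℂ × ℂ), r ≤ s →
        (∀ t ∈ Set.Icc r s, p t ∈ G) →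
        (∀ t ∈ Set.Icc r s, HasDerivAt p (p' t) t) →
        ContinuousOn p' (Set.Icc r s) →
        p r = p s →
        ∫ t in r..s,
          (bmul (ω₁ (p t)) ((p' t).1, 0) + bmul (ω₂ (p t)) ((p' t).2, 0)) = 0) ↔
      (∃ Ω : ℂ × ℂ → ℂ × ℂ, ∀ q ∈ G,
        HasDerivAt (fun z => (Ω (z, q.2)).1) ((ω₁ q).1) q.1 ∧
        HasDerivAt (fun z => (Ω (z, q.2)).2) ((ω₁ q).2) q.1 ∧
        HasDerivAt (fun z => (Ω (q.1, z)).1) ((ω₂ q).1) q.2 ∧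
        HasDerivAt (fun z => (Ω (q.1, z)).2) ((ω₂ q).2) q.2) := by
  have hω : ContinuousOn (fun q ↦ (bicomplexForm ω₁ ω₂ q).restrictScalars ℝ) G :=
    (continuous_restrictScalars (𝕜 := ℂ) (𝕜' := ℝ)).comp_continuousOn (hc₁.bicomplexForm hc₂)
  have key := integral_closed_curve_eq_zero_iff_exists_hasFDerivAt hG hconn hω
  simp only [coe_restrictScalars', bicomplexForm_apply] at key
  rw [key]
  refine exists_congr fun Ω ↦ ?_
  calc (∀ q ∈ G, HasFDerivAt Ω ((bicomplexForm ω₁ ω₂ q).restrictScalars ℝ) q)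
      ↔ ∀ q ∈ G, HasFDerivAt Ω (bicomplexForm ω₁ ω₂ q) q :=
        forall₂_congr fun q _ ↦
          ⟨fun h ↦ hasFDerivAt_of_restrictScalars ℝ h rfl, fun h ↦ h.restrictScalars ℝ⟩
    _ ↔ _ := (hG.forall_hasFDerivAt_coprod_iff (hc₁.toSpanSingleton (𝕜 := ℂ))
      (hc₂.toSpanSingleton (𝕜 := ℂ))).trans <|
        forall₂_congr fun q _ ↦ by
          rw [← hasDerivAt_iff_hasFDerivAt, ← hasDerivAt_iff_hasFDerivAt, hasDerivAt_prod_iff,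
            hasDerivAt_prod_iff, and_assoc]
end

section
/- Let G′ ⊆ ℂ×ℂ be open and let η₁, η₂ : ℂ×ℂ → ℂ be ℂ-differentiable on G′. Define φₖ(a,b) = ηₖ(a, conj b) (so each φₖ is holomorphic in a and conjugate holomorphic in b), and let Ψ be the associated quaternionic function of (φ₁,φ₂). Then Ψ is regular: Fueter's equation ∂Ψ/∂x + i·∂Ψ/∂y + j·∂Ψ/∂z + k·∂Ψ/∂u = 0 holds at every point (x,y,z,u) with (x+iy, z−iu) ∈ G′. -/
/-- The quaternionic function associated with a pair of complex functions:
`Ψ(x,y,z,u) = Re φ₁ + (Im φ₁)i + (Re φ₂)j + (Im φ₂)k`, the argument being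
`(x+iy, z+iu) ∈ ℂ × ℂ`. -/
noncomputable def quatFn (φ₁ φ₂ : ℂ × ℂ → ℂ) (p : ℂ × ℂ) : Quaternion ℝ :=
  ⟨(φ₁ p).re, (φ₁ p).im, (φ₂ p).re, (φ₂ p).im⟩

/-- The quaternion unit `i`. -/
noncomputable def qI : Quaternion ℝ := ⟨0, 1, 0, 0⟩
/-- The quaternion unit `j`. -/
noncomputable def qJ : Quaternion ℝ := ⟨0, 0, 1, 0⟩
/-- The quaternion unit `k`. -/
noncomputable def qK : Quaternion ℝ := ⟨0, 0, 0, 1⟩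

/-!
Identify `ℂ × ℂ` with `ℍ` by `(a, b) ↦ a + b j` (`quatOfPair`). This real-linear map turns
multiplication by `i` on `ℂ × ℂ` into left multiplication by the quaternion `i`. Now
`Ψ = quatOfPair ∘ (η₁, η₂) ∘ conjSnd`, where `conjSnd` conjugates the second variable, so by the
ℂ-linearity of the derivative of `(η₁, η₂)` the real derivative `D` of `Ψ` satisfies
`D (i, 0) = i D (1, 0)` and `D (0, i) = -i D (0, 1)`. Fueter's expression therefore collapses
to `(1 + i²) D (1, 0) + (j - k i) D (0, 1) = 0`.
-/

open Complex ComplexConjugate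

noncomputable def conjSnd : ℂ × ℂ →L[ℝ] ℂ × ℂ :=
  (ContinuousLinearMap.id ℝ ℂ).prodMap conjCLE.toContinuousLinearMap

@[simp] lemma conjSnd_apply (p : ℂ × ℂ) : conjSnd p = (p.1, conj p.2) := rfl

noncomputable def quatOfPair : ℂ × ℂ →L[ℝ] Quaternion ℝ :=
  LinearMap.toContinuousLinearMap
    { toFun := fun w => ⟨w.1.re, w.1.im, w.2.re, w.2.im⟩
      map_add' := fun _ _ => rfl
      map_smul' := fun c _ => by
        change (⟨_, _, _, _⟩ : Quaternion ℝ) = c • (⟨_, _, _, _⟩ : Quaternion ℝ)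
        ext <;> simp }

@[simp] lemma quatOfPair_re (w : ℂ × ℂ) : (quatOfPair w).re = w.1.re := rfl
@[simp] lemma quatOfPair_imI (w : ℂ × ℂ) : (quatOfPair w).imI = w.1.im := rfl
@[simp] lemma quatOfPair_imJ (w : ℂ × ℂ) : (quatOfPair w).imJ = w.2.re := rfl
@[simp] lemma quatOfPair_imK (w : ℂ × ℂ) : (quatOfPair w).imK = w.2.im := rfl

lemma quatFn_eq_comp (φ₁ φ₂ : ℂ × ℂ → ℂ) :
    quatFn φ₁ φ₂ = quatOfPair ∘ fun p => (φ₁ p, φ₂ p) := rfl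

/- Quaternion products must be expanded by `Quaternion.re_mul` & co. before `qI`, `qJ`, `qK`
are unfolded: the `QuaternionAlgebra` lemmas about `mk` do not see through `Quaternion`'s
instances. -/
lemma quatOfPair_I_smul (w : ℂ × ℂ) : quatOfPair (I • w) = qI * quatOfPair w := by
  ext <;> simp only [Quaternion.re_mul, Quaternion.imI_mul, Quaternion.imJ_mul,
    Quaternion.imK_mul] <;> simp [qI]

lemma qI_mul_qI : qI * qI = -1 := by
  ext <;> simp only [Quaternion.re_mul, Quaternion.imI_mul, Quaternion.imJ_mul,
    Quaternion.imK_mul] <;>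
    simp [qI, Quaternion.re_one, Quaternion.imI_one, Quaternion.imJ_one, Quaternion.imK_one]

lemma qK_mul_qI : qK * qI = qJ := by
  ext <;> simp only [Quaternion.re_mul, Quaternion.imI_mul, Quaternion.imJ_mul,
    Quaternion.imK_mul] <;> simp [qI, qJ, qK]

noncomputable def fueterOp (D : ℂ × ℂ →L[ℝ] Quaternion ℝ) : Quaternion ℝ :=
  D (1, 0) + qI * D (I, 0) + qJ * D (0, 1) + qK * D (0, I)

lemma fueterOp_comp_conjSnd (L : ℂ × ℂ →L[ℂ] ℂ × ℂ) :
    fueterOp (quatOfPair ∘L L.restrictScalars ℝ ∘L conjSnd) = 0 := by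
  have hI : conjSnd (I, 0) = I • (1, 0) := by simp
  have hIc : conjSnd (0, I) = -I • (0, 1) := by simp
  simp only [fueterOp, ContinuousLinearMap.comp_apply, ContinuousLinearMap.coe_restrictScalars',
    hI, hIc, conjSnd_apply, map_zero, map_one, map_smul, neg_smul, map_neg, quatOfPair_I_smul]
  rw [← mul_assoc, mul_neg, ← mul_assoc, qI_mul_qI, qK_mul_qI]
  noncomm_ring

lemma fueterOp_fderiv_comp_conjSnd {f : ℂ × ℂ → ℂ × ℂ} {p : ℂ × ℂ}
    (hf : DifferentiableAt ℂ f (conjSnd p)) :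
    fueterOp (fderiv ℝ (quatOfPair ∘ f ∘ conjSnd) p) = 0 := by
  have hD : HasFDerivAt (quatOfPair ∘ f ∘ conjSnd)
      (quatOfPair ∘L (fderiv ℂ f (conjSnd p)).restrictScalars ℝ ∘L conjSnd) p :=
    quatOfPair.hasFDerivAt.comp p
      ((hf.hasFDerivAt.restrictScalars ℝ).comp p conjSnd.hasFDerivAt)
  rw [hD.fderiv]
  exact fueterOp_comp_conjSnd _

theorem coanalytic_implies_regular_general (G' : Set (ℂ × ℂ))
    (η₁ η₂ : ℂ × ℂ → ℂ)
    (hd₁ : ∀ q ∈ G', DifferentiableAt ℂ η₁ q)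
    (hd₂ : ∀ q ∈ G', DifferentiableAt ℂ η₂ q)
    (φ₁ φ₂ : ℂ × ℂ → ℂ)
    (hφ₁ : ∀ a b : ℂ, φ₁ (a, b) = η₁ (a, (starRingEnd ℂ) b))
    (hφ₂ : ∀ a b : ℂ, φ₂ (a, b) = η₂ (a, (starRingEnd ℂ) b))
    (Ψ : ℂ × ℂ → Quaternion ℝ) (hΨ : Ψ = quatFn φ₁ φ₂) :
    ∀ x y z u : ℝ,
      ((x + y * Complex.I, z - u * Complex.I) : ℂ × ℂ) ∈ G' →
      fderiv ℝ Ψ (x + y * Complex.I, z + u * Complex.I) (1, 0) +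
        qI * fderiv ℝ Ψ (x + y * Complex.I, z + u * Complex.I) (Complex.I, 0) +
        qJ * fderiv ℝ Ψ (x + y * Complex.I, z + u * Complex.I) (0, 1) +
        qK * fderiv ℝ Ψ (x + y * Complex.I, z + u * Complex.I) (0, Complex.I) = 0 := by
  intro x y z u hq
  show fueterOp (fderiv ℝ Ψ (x + y * I, z + u * I)) = 0
  have hconj : conjSnd (x + y * I, z + u * I) = (x + y * I, z - u * I) := by
    simp [Complex.ext_iff]
  have hΨη : Ψ = quatOfPair ∘ (fun q => (η₁ q, η₂ q)) ∘ conjSnd := by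
    ext1 ⟨a, b⟩
    simp only [hΨ, quatFn_eq_comp, Function.comp_apply, conjSnd_apply, hφ₁, hφ₂]
  rw [← hconj] at hq
  rw [hΨη]
  exact fueterOp_fderiv_comp_conjSnd ((hd₁ _ hq).prodMk (hd₂ _ hq))

theorem coanalytic_implies_regular (G' : Set (ℂ × ℂ)) (hG' : IsOpen G')
    (η₁ η₂ : ℂ × ℂ → ℂ)
    (hd₁ : ∀ q ∈ G', DifferentiableAt ℂ η₁ q)
    (hd₂ : ∀ q ∈ G', DifferentiableAt ℂ η₂ q)
    (φ₁ φ₂ : ℂ × ℂ → ℂ)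
    (hφ₁ : ∀ a b : ℂ, φ₁ (a, b) = η₁ (a, (starRingEnd ℂ) b))
    (hφ₂ : ∀ a b : ℂ, φ₂ (a, b) = η₂ (a, (starRingEnd ℂ) b))
    (Ψ : ℂ × ℂ → Quaternion ℝ) (hΨ : Ψ = quatFn φ₁ φ₂) :
    ∀ x y z u : ℝ,
      ((x + y * Complex.I, z - u * Complex.I) : ℂ × ℂ) ∈ G' →
      fderiv ℝ Ψ (x + y * Complex.I, z + u * Complex.I) (1, 0) +
        qI * fderiv ℝ Ψ (x + y * Complex.I, z + u * Complex.I) (Complex.I, 0) +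
        qJ * fderiv ℝ Ψ (x + y * Complex.I, z + u * Complex.I) (0, 1) +
        qK * fderiv ℝ Ψ (x + y * Complex.I, z + u * Complex.I) (0, Complex.I) = 0 :=
  coanalytic_implies_regular_general G' η₁ η₂ hd₁ hd₂ φ₁ φ₂ hφ₁ hφ₂ Ψ hΨ
end
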